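/- arXiv:2512.24355 — 13 statements merged into one kernel-verified Lean document; each statement's English description precedes it below -/
import Mathlib

section
/- Let G = (V,E) be a finite directed graph with vertex weights w ≥ 0, let s,t ∈ V, let (L,S,R) be an s-t vertex-cut of G, and let G' be the split graph of G with regular-edge capacity M > 0. Set X = L^in ∪ L^out ∪ S^in and Y = S^out ∪ R^in ∪ R^out. Then (X,Y) is an s^out–t^in edge-cut of G', the set of edges of G' going from a vertex of X to a vertex of Y is exactly {(v^in, v^out) : v ∈ S}, and the value of the cut (X,Y) equals w(S). -/
open Classical Finset

variable {V : Type*}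

/-- `(L, S, R)` is a vertex-cut of the directed graph on the finite vertex set `V` with edge
relation `E`: a partition of `V` into three disjoint sets with `L, R ≠ ∅` such that no edge
goes from a vertex of `L` to a vertex of `R`. -/
def IsVertexCut [Fintype V] [DecidableEq V] (E : V → V → Prop) (L S R : Finset V) : Prop :=
  L ≠ ∅ ∧ R ≠ ∅ ∧ Disjoint L S ∧ Disjoint L R ∧ Disjoint S R ∧
    L ∪ S ∪ R = Finset.univ ∧ ∀ u ∈ L, ∀ v ∈ R, ¬ E u v

/-- The capacity function of the split graph `G'` of `G`: vertex `v` has an in-copy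
`Sum.inl v = v^in` and an out-copy `Sum.inr v = v^out`; the special edge `(v^in, v^out)` has
capacity `w v`, each regular edge `(u^out, v^in)` for `(u,v) ∈ E` has capacity `M`, and all
other capacities are `0`. -/
noncomputable def splitCap (E : V → V → Prop) (w : V → ℝ) (M : ℝ) :
    V ⊕ V → V ⊕ V → ℝ
  | Sum.inl u, Sum.inr v => if u = v then w u else 0
  | Sum.inr u, Sum.inl v => if E u v then M else 0
  | _, _ => 0

/-- The edge relation of the split graph `G'` of `G`. -/
def splitEdge (E : V → V → Prop) : V ⊕ V → V ⊕ V → Prop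
  | Sum.inl u, Sum.inr v => u = v
  | Sum.inr u, Sum.inl v => E u v
  | _, _ => False

/-- Given an `s`-`t` vertex-cut `(L,S,R)` of `G`, the pair `X = L^in ∪ L^out ∪ S^in`,
`Y = S^out ∪ R^in ∪ R^out` is an `s^out`-`t^in` edge-cut of the split graph `G'`, the edges of
`G'` from `X` to `Y` are exactly the special edges `(v^in, v^out)` for `v ∈ S`, and the value
of the cut `(X,Y)` equals `w(S)`. -/
theorem stmt_1 [Fintype V] [DecidableEq V] (E : V → V → Prop)
    (w : V → ℝ) (hw : ∀ v, 0 ≤ w v) (s t : V) (M : ℝ) (hM : 0 < M)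
    (L S R : Finset V) (hcut : IsVertexCut E L S R) (hs : s ∈ L) (ht : t ∈ R) :
    ∀ X Y : Finset (V ⊕ V),
      X = L.image Sum.inl ∪ L.image Sum.inr ∪ S.image Sum.inl →
      Y = S.image Sum.inr ∪ R.image Sum.inl ∪ R.image Sum.inr →
      (Disjoint X Y ∧ X ∪ Y = Finset.univ ∧ Sum.inr s ∈ X ∧ Sum.inl t ∈ Y) ∧
      (∀ a b : V ⊕ V,
        (a ∈ X ∧ b ∈ Y ∧ splitEdge E a b) ↔ ∃ v ∈ S, a = Sum.inl v ∧ b = Sum.inr v) ∧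
      (∑ a ∈ X, ∑ b ∈ Y, splitCap E w M a b) = ∑ v ∈ S, w v := by
 
  obtain ⟨hL, hR, hLS, hLR, hSR, hUniv, hE⟩ := hcut
  intro X Y hX hY
  have hLS' := Finset.disjoint_left.mp hLS
  have hLR' := Finset.disjoint_left.mp hLR
  have hSR' := Finset.disjoint_left.mp hSR
  have hall : ∀ v : V, v ∈ L ∨ v ∈ S ∨ v ∈ R := by
    intro v
    have hv : v ∈ L ∪ S ∪ R := hUniv ▸ Finset.mem_univ v
    simpa [Finset.mem_union, or_assoc] using hv
  have hXl : ∀ u : V, Sum.inl u ∈ X ↔ u ∈ L ∨ u ∈ S := by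
    intro u; simp [hX]
  have hXr : ∀ u : V, Sum.inr u ∈ X ↔ u ∈ L := by
    intro u; simp [hX]
  have hYl : ∀ u : V, Sum.inl u ∈ Y ↔ u ∈ R := by
    intro u; simp [hY]
  have hYr : ∀ u : V, Sum.inr u ∈ Y ↔ u ∈ S ∨ u ∈ R := by
    intro u; simp [hY]
  refine ⟨⟨?_, ?_, ?_, ?_⟩, ?_, ?_⟩
  · rw [Finset.disjoint_left]
    rintro (u | u) haX haY
    · rcases (hXl u).mp haX with h | h
      · exact hLR' h ((hYl u).mp haY)
      · exact hSR' h ((hYl u).mp haY)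
    · rcases (hYr u).mp haY with h | h
      · exact hLS' ((hXr u).mp haX) h
      · exact hLR' ((hXr u).mp haX) h
  · ext a
    simp only [Finset.mem_union, Finset.mem_univ, iff_true]
    rcases a with u | u
    · rcases hall u with h | h | h
      · exact Or.inl ((hXl u).mpr (Or.inl h))
      · exact Or.inl ((hXl u).mpr (Or.inr h))
      · exact Or.inr ((hYl u).mpr h)
    · rcases hall u with h | h | h
      · exact Or.inl ((hXr u).mpr h)
      · exact Or.inr ((hYr u).mpr (Or.inl h))
      · exact Or.inr ((hYr u).mpr (Or.inr h))
  · exact (hXr s).mpr hs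
  · exact (hYl t).mpr ht
  · intro a b
    constructor
    · rintro ⟨haX, hbY, hed⟩
      rcases a with u | u <;> rcases b with v | v
      · exact hed.elim
      · have huv : u = v := hed
        subst huv
        refine ⟨u, ?_, rfl, rfl⟩
        rcases (hXl u).mp haX with h | h
        · rcases (hYr u).mp hbY with h' | h'
          · exact absurd h' (hLS' h)
          · exact absurd h' (hLR' h)
        · exact h
      · have huv : E u v := hed
        exact absurd huv (hE u ((hXr u).mp haX) v ((hYl v).mp hbY))
      · exact hed.elim
    · rintro ⟨v, hv, rfl, rfl⟩
      exact ⟨(hXl v).mpr (Or.inr hv), (hYr v).mpr (Or.inl hv), show v = v from rfl⟩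
  · have hXeq : X = (L ∪ S).image Sum.inl ∪ L.image Sum.inr := by
      rw [hX, Finset.image_union]
      ext a; simp only [Finset.mem_union]; tauto
    have dX : Disjoint ((L ∪ S).image Sum.inl) (L.image Sum.inr) := by
      simp [Finset.disjoint_left]
    have dY1 : Disjoint (S.image Sum.inr ∪ R.image Sum.inl) (R.image Sum.inr) := by
      rw [Finset.disjoint_union_left]
      constructor
      · exact (Finset.disjoint_image Sum.inr_injective).mpr hSR
      · simp [Finset.disjoint_left]
    have dY2 : Disjoint (S.image Sum.inr) (R.image Sum.inl) := by
      simp [Finset.disjoint_left]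
    have hinl : ∀ (A : Finset V) (g : V ⊕ V → ℝ),
        ∑ a ∈ A.image Sum.inl, g a = ∑ u ∈ A, g (Sum.inl u) := by
      intro A g
      exact Finset.sum_image (by simp)
    have hinr : ∀ (A : Finset V) (g : V ⊕ V → ℝ),
        ∑ a ∈ A.image Sum.inr, g a = ∑ u ∈ A, g (Sum.inr u) := by
      intro A g
      exact Finset.sum_image (by simp)
    have hinner : ∀ a : V ⊕ V, ∑ b ∈ Y, splitCap E w M a b =
        (∑ v ∈ S, splitCap E w M a (Sum.inr v)) + (∑ v ∈ R, splitCap E w M a (Sum.inl v)) +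
          (∑ v ∈ R, splitCap E w M a (Sum.inr v)) := by
      intro a
      rw [hY, Finset.sum_union dY1, Finset.sum_union dY2, hinl, hinr, hinr]
    rw [hXeq, Finset.sum_union dX, hinl, hinr]
    have h1 : ∑ u ∈ L ∪ S, ∑ b ∈ Y, splitCap E w M (Sum.inl u) b = ∑ v ∈ S, w v := by
      have : ∀ u ∈ L ∪ S, ∑ b ∈ Y, splitCap E w M (Sum.inl u) b
          = if u ∈ S then w u else 0 := by
        intro u hu
        rw [hinner]
        have hcap : ∀ v : V, splitCap E w M (Sum.inl u) (Sum.inr v) = if u = v then w u else 0 :=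
          fun v => by simp [splitCap]
        have e1 : ∑ v ∈ S, splitCap E w M (Sum.inl u) (Sum.inr v) = if u ∈ S then w u else 0 := by
          simp only [hcap]
          exact Finset.sum_ite_eq S u (fun _ => w u)
        have e2 : ∑ v ∈ R, splitCap E w M (Sum.inl u) (Sum.inl v) = 0 :=
          Finset.sum_eq_zero (fun v _ => rfl)
        have e3 : ∑ v ∈ R, splitCap E w M (Sum.inl u) (Sum.inr v) = 0 := by
          refine Finset.sum_eq_zero (fun v hv => ?_)
          rw [hcap, if_neg]
          rintro rfl
          rcases Finset.mem_union.mp hu with h | h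
          · exact hLR' h hv
          · exact hSR' h hv
        rw [e1, e2, e3, add_zero, add_zero]
      rw [Finset.sum_congr rfl this, Finset.sum_ite_mem, Finset.union_inter_cancel_right]
    have h2 : ∑ u ∈ L, ∑ b ∈ Y, splitCap E w M (Sum.inr u) b = 0 := by
      refine Finset.sum_eq_zero (fun u hu => ?_)
      rw [hinner]
      have e1 : ∑ v ∈ S, splitCap E w M (Sum.inr u) (Sum.inr v) = 0 :=
        Finset.sum_eq_zero (fun v _ => rfl)
      have e2 : ∑ v ∈ R, splitCap E w M (Sum.inr u) (Sum.inl v) = 0 := by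
        refine Finset.sum_eq_zero (fun v hv => ?_)
        show (if E u v then M else 0) = 0
        rw [if_neg (hE u hu v hv)]
      have e3 : ∑ v ∈ R, splitCap E w M (Sum.inr u) (Sum.inr v) = 0 :=
        Finset.sum_eq_zero (fun v _ => rfl)
      rw [e1, e2, e3, add_zero, add_zero]
    rw [h1, h2, add_zero]
end

section
/- Let G = (V,E) be a finite directed graph with vertex weights w ≥ 0, let s ≠ t be vertices of G, and let G' be the split graph of G with regular-edge capacity M > 0. Let (X,Y) be an s^out–t^in edge-cut of G' of value c(X,Y) < M, and set L = {v ∈ V ∖ {t} : v^out ∈ X}. Then s ∈ L, t ∉ L ∪ N⁺_G(L), the tripartition of V induced by L is an s-t vertex-cut of G, and its value satisfies w(N⁺_G(L)) ≤ c(X,Y). -/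
open Classical Finset

variable {V : Type*}

/-- The out-neighborhood `N⁺_G(X)` of a vertex set `X`. -/
noncomputable def outNbr [Fintype V] (E : V → V → Prop) (X : Finset V) : Finset V :=
  Finset.univ.filter fun v => v ∉ X ∧ ∃ u ∈ X, E u v

/-- Given an `s^out`-`t^in` edge-cut `(X,Y)` of the split graph `G'` of value `< M`, the set
`L = {v ∈ V \ {t} : v^out ∈ X}` satisfies `s ∈ L`, `t ∉ L ∪ N⁺(L)`, the tripartition of `V`
induced by `L` is an `s`-`t` vertex-cut of `G`, and its value is at most the value of `(X,Y)`. -/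
theorem stmt_2 [Fintype V] [DecidableEq V] (E : V → V → Prop) (w : V → ℝ)
    (hw : ∀ v, 0 ≤ w v) (s t : V) (hst : s ≠ t) (M : ℝ) (hM : 0 < M)
    (X Y : Finset (V ⊕ V)) (hXY : Disjoint X Y) (hXYuniv : X ∪ Y = Finset.univ)
    (hsX : Sum.inr s ∈ X) (htY : Sum.inl t ∈ Y)
    (hval : ∑ a ∈ X, ∑ b ∈ Y, splitCap E w M a b < M) :
    ∀ L : Finset V, L = Finset.univ.filter (fun v => v ≠ t ∧ Sum.inr v ∈ X) →
      s ∈ L ∧ t ∉ L ∪ outNbr E L ∧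
      IsVertexCut E L (outNbr E L) (Finset.univ \ (L ∪ outNbr E L)) ∧
      s ∈ L ∧ t ∈ Finset.univ \ (L ∪ outNbr E L) ∧
      ∑ v ∈ outNbr E L, w v ≤ ∑ a ∈ X, ∑ b ∈ Y, splitCap E w M a b := by
  intro L hL
  have hcap : ∀ a b, 0 ≤ splitCap E w M a b := by
    rintro (a | a) (b | b)
    · simp [splitCap]
    · simp only [splitCap]; split_ifs; exacts [hw a, le_rfl]
    · simp only [splitCap]; split_ifs; exacts [hM.le, le_rfl]
    · simp [splitCap]
  have hterm : ∀ a ∈ X, ∀ b ∈ Y, splitCap E w M a b ≤ ∑ a ∈ X, ∑ b ∈ Y, splitCap E w M a b := by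
    intro a ha b hb
    calc splitCap E w M a b ≤ ∑ b ∈ Y, splitCap E w M a b :=
          Finset.single_le_sum (fun i _ => hcap a i) hb
      _ ≤ ∑ a ∈ X, ∑ b ∈ Y, splitCap E w M a b :=
          Finset.single_le_sum (fun i (_ : i ∈ X) => Finset.sum_nonneg fun j _ => hcap i j) ha
  have hreg : ∀ u v, Sum.inr u ∈ X → Sum.inl v ∈ Y → ¬ E u v := by
    intro u v hu hv hE
    have hc : splitCap E w M (Sum.inr u) (Sum.inl v) = M := by simp [splitCap, hE]
    have h1 := hterm _ hu _ hv
    rw [hc] at h1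
    linarith
  have hmemY : ∀ a, a ∉ X → a ∈ Y := by
    intro a ha
    have : a ∈ X ∪ Y := hXYuniv ▸ Finset.mem_univ a
    rcases Finset.mem_union.1 this with h | h
    · exact absurd h ha
    · exact h
  have hmemX : ∀ a, a ∉ Y → a ∈ X := by
    intro a ha
    have : a ∈ X ∪ Y := hXYuniv ▸ Finset.mem_univ a
    rcases Finset.mem_union.1 this with h | h
    · exact h
    · exact absurd h ha
  have hnotY : ∀ a, a ∈ X → a ∉ Y := fun a ha hb => Finset.disjoint_left.1 hXY ha hb
  have hLmem : ∀ v, v ∈ L ↔ (v ≠ t ∧ Sum.inr v ∈ X) := by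
    intro v; simp [hL]
  have hsL : s ∈ L := (hLmem s).2 ⟨hst, hsX⟩
  have htL : t ∉ L := fun h => ((hLmem t).1 h).1 rfl
  have hLX : ∀ u ∈ L, Sum.inr u ∈ X := fun u hu => ((hLmem u).1 hu).2
  have htS : t ∉ outNbr E L := by
    simp only [outNbr, Finset.mem_filter, Finset.mem_univ, true_and]
    rintro ⟨-, u, huL, hE⟩
    exact hreg u t (hLX u huL) htY hE
  have htLS : t ∉ L ∪ outNbr E L := by
    rw [Finset.mem_union]
    rintro (h | h)
    · exact htL h
    · exact htS h
  have hS : ∀ v ∈ outNbr E L, Sum.inl v ∈ X ∧ Sum.inr v ∈ Y := by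
    intro v hv
    simp only [outNbr, Finset.mem_filter, Finset.mem_univ, true_and] at hv
    obtain ⟨hvL, u, huL, hE⟩ := hv
    have huX := hLX u huL
    have hvinX : Sum.inl v ∈ X := by
      by_contra h
      exact hreg u v huX (hmemY _ h) hE
    refine ⟨hvinX, ?_⟩
    by_contra h
    have hvoutX : Sum.inr v ∈ X := hmemX _ h
    by_cases hvt : v = t
    · subst hvt
      exact hnotY _ hvinX htY
    · exact hvL ((hLmem v).2 ⟨hvt, hvoutX⟩)
  have hDLS : Disjoint L (outNbr E L) := by
    rw [Finset.disjoint_left]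
    intro a haL haS
    simp only [outNbr, Finset.mem_filter, Finset.mem_univ, true_and] at haS
    exact haS.1 haL
  have hcut : IsVertexCut E L (outNbr E L) (Finset.univ \ (L ∪ outNbr E L)) := by
    refine ⟨Finset.ne_empty_of_mem hsL,
      Finset.ne_empty_of_mem (Finset.mem_sdiff.2 ⟨Finset.mem_univ t, htLS⟩), hDLS, ?_, ?_, ?_, ?_⟩
    · rw [Finset.disjoint_left]
      intro a haL haR
      exact (Finset.mem_sdiff.1 haR).2 (Finset.mem_union_left _ haL)
    · rw [Finset.disjoint_left]
      intro a haS haR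
      exact (Finset.mem_sdiff.1 haR).2 (Finset.mem_union_right _ haS)
    · exact Finset.union_sdiff_of_subset (Finset.subset_univ _)
    · intro u huL v hvR hE
      have hv := Finset.mem_sdiff.1 hvR
      apply hv.2
      rw [Finset.mem_union]
      by_cases hvL : v ∈ L
      · exact Or.inl hvL
      · exact Or.inr (by simp only [outNbr, Finset.mem_filter, Finset.mem_univ, true_and]; exact ⟨hvL, u, huL, hE⟩)
  refine ⟨hsL, htLS, hcut, hsL, Finset.mem_sdiff.2 ⟨Finset.mem_univ t, htLS⟩, ?_⟩
  calc ∑ v ∈ outNbr E L, w v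
      = ∑ v ∈ outNbr E L, splitCap E w M (Sum.inl v) (Sum.inr v) := by
        refine Finset.sum_congr rfl fun v _ => ?_
        simp [splitCap]
    _ = ∑ p ∈ (outNbr E L).image (fun v => ((Sum.inl v : V ⊕ V), (Sum.inr v : V ⊕ V))),
          splitCap E w M p.1 p.2 := by
        rw [Finset.sum_image]
        intro a _ b _ h
        simpa using h
    _ ≤ ∑ p ∈ X ×ˢ Y, splitCap E w M p.1 p.2 := by
        apply Finset.sum_le_sum_of_subset_of_nonneg
        · intro p hp
          simp only [Finset.mem_image] at hp
          obtain ⟨v, hv, rfl⟩ := hp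
          exact Finset.mem_product.2 ⟨(hS v hv).1, (hS v hv).2⟩
        · intro p _ _
          exact hcap _ _
    _ = ∑ a ∈ X, ∑ b ∈ Y, splitCap E w M a b := by rw [Finset.sum_product]
end

section
/- Let G = (V,E) be a finite directed graph with vertex weights w ≥ 0, let x ≠ y be vertices, and let B ⊆ V ∖ {y}. Let G ∪ B denote the graph obtained from G by adding the shortcut edge (v,y) for every v ∈ B. Then: (i) every x-y vertex-cut of G ∪ B is also an x-y vertex-cut of G with the same value, and hence the minimum x-y vertex-cut value of G ∪ B is at least that of G; and (ii) if (L,S,R) is a minimum x-y vertex-cut of G and B ∩ L = ∅, then (L,S,R) is an x-y vertex-cut of G ∪ B, and the minimum x-y vertex-cut value of G ∪ B equals w(S). -/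
open Classical Finset

variable {V : Type*}

/-- `(L, S, R)` is an `s`-`t` vertex-cut. -/
def IsSTVertexCut [Fintype V] [DecidableEq V] (E : V → V → Prop)
    (L S R : Finset V) (s t : V) : Prop :=
  IsVertexCut E L S R ∧ s ∈ L ∧ t ∈ R

/-- Adding shortcut edges `(v,y)` for `v ∈ B ⊆ V \ {y}` to `G`:
(i) every `x`-`y` vertex-cut of `G ∪ B` is an `x`-`y` vertex-cut of `G` (with the same value,
which is the identical expression `w(S)`), and hence the minimum `x`-`y` vertex-cut value of
`G ∪ B` is at least that of `G`;
(ii) if `(L,S,R)` is a minimum `x`-`y` vertex-cut of `G` and `B ∩ L = ∅`, then `(L,S,R)` is an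
`x`-`y` vertex-cut of `G ∪ B` and the minimum `x`-`y` vertex-cut value of `G ∪ B` equals
`w(S)`. -/
theorem stmt_4 [Fintype V] [DecidableEq V] (E : V → V → Prop) (w : V → ℝ)
    (hw : ∀ v, 0 ≤ w v) (x y : V) (hxy : x ≠ y) (B : Finset V) (hB : y ∉ B) :
    -- (i)
    ((∀ L S R : Finset V,
        IsSTVertexCut (fun u v => E u v ∨ (u ∈ B ∧ v = y)) L S R x y →
        IsSTVertexCut E L S R x y) ∧
      (∀ L' S' R' : Finset V,
        IsSTVertexCut (fun u v => E u v ∨ (u ∈ B ∧ v = y)) L' S' R' x y →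
        ∀ L S R : Finset V, IsSTVertexCut E L S R x y →
          (∀ L₁ S₁ R₁ : Finset V, IsSTVertexCut E L₁ S₁ R₁ x y →
            ∑ v ∈ S, w v ≤ ∑ v ∈ S₁, w v) →
          ∑ v ∈ S, w v ≤ ∑ v ∈ S', w v)) ∧
    -- (ii)
    (∀ L S R : Finset V, IsSTVertexCut E L S R x y →
        (∀ L₁ S₁ R₁ : Finset V, IsSTVertexCut E L₁ S₁ R₁ x y →
          ∑ v ∈ S, w v ≤ ∑ v ∈ S₁, w v) →
        Disjoint B L →
        IsSTVertexCut (fun u v => E u v ∨ (u ∈ B ∧ v = y)) L S R x y ∧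
        ∀ L' S' R' : Finset V,
          IsSTVertexCut (fun u v => E u v ∨ (u ∈ B ∧ v = y)) L' S' R' x y →
          ∑ v ∈ S, w v ≤ ∑ v ∈ S', w v) := by
  have key : ∀ L S R : Finset V,
      IsSTVertexCut (fun u v => E u v ∨ (u ∈ B ∧ v = y)) L S R x y →
      IsSTVertexCut E L S R x y := by
    intro L S R ⟨⟨h1, h2, h3, h4, h5, h6, h7⟩, hx, hy⟩
    exact ⟨⟨h1, h2, h3, h4, h5, h6, fun u hu v hv hE => h7 u hu v hv (Or.inl hE)⟩, hx, hy⟩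
  refine ⟨⟨key, fun L' S' R' h' L S R hc hmin => hmin L' S' R' (key L' S' R' h')⟩, ?_⟩
  intro L S R hc hmin hBL
  have hcut : IsSTVertexCut (fun u v => E u v ∨ (u ∈ B ∧ v = y)) L S R x y := by
    obtain ⟨⟨h1, h2, h3, h4, h5, h6, h7⟩, hx, hy⟩ := hc
    refine ⟨⟨h1, h2, h3, h4, h5, h6, ?_⟩, hx, hy⟩
    rintro u hu v hv (hE | ⟨huB, rfl⟩)
    · exact h7 u hu v hv hE
    · exact absurd hu (Finset.disjoint_left.mp hBL huB)
  exact ⟨hcut, fun L' S' R' h' => hmin L' S' R' (key L' S' R' h')⟩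
end

section
/- Let H be an edge-capacitated directed graph on a finite vertex set V, with capacities c : V × V → ℝ≥0, let x ≠ y ∈ V, and let η > 0. Let Ĥ be the edge-capacitated graph on V with capacities ĉ(u,v) = c(u,v) + η when u = x, and ĉ(u,v) = c(u,v) otherwise. If (X,Y) is a minimum x-y edge-cut of Ĥ (with respect to ĉ), then every x-y edge-cut (X',Y') of H satisfies η · |X' ∖ X| ≤ c(X',Y'). -/
open Classical Finset

variable {V : Type*}

/-- Let `η > 0` and let `Ĥ` be obtained from `H` by adding an edge `(x,v)` of capacity `η`
for every vertex `v` (i.e. `ĉ(u,v) = c(u,v) + η` if `u = x` and `ĉ(u,v) = c(u,v)` otherwise).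
If `(X, Xᶜ)` is a minimum `x`-`y` edge-cut of `Ĥ`, then every `x`-`y` edge-cut `(X', X'ᶜ)` of
`H` satisfies `η · |X' \ X| ≤ c(X', X'ᶜ)`. -/
theorem stmt_6 [Fintype V] [DecidableEq V] (c : V → V → ℝ) (hc : ∀ u v, 0 ≤ c u v)
    (x y : V) (hxy : x ≠ y) (η : ℝ) (hη : 0 < η)
    (X : Finset V) (hxX : x ∈ X) (hyX : y ∉ X)
    (hmin : ∀ X' : Finset V, x ∈ X' → y ∉ X' →
      (∑ u ∈ X, ∑ v ∈ Xᶜ, (if u = x then c u v + η else c u v)) ≤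
      ∑ u ∈ X', ∑ v ∈ X'ᶜ, (if u = x then c u v + η else c u v)) :
    ∀ X' : Finset V, x ∈ X' → y ∉ X' →
      η * ((X' \ X).card : ℝ) ≤ ∑ u ∈ X', ∑ v ∈ X'ᶜ, c u v := by
  intro X' hxX' hyX'
  set A := X ∪ X' with hA
  have hxA : x ∈ A := Finset.mem_union_left _ hxX
  have hyA : y ∉ A := by simp [hA, hyX, hyX']
  have key := hmin A hxA hyA
  have hsplit : ∀ (S : Finset V), x ∈ S →
      (∑ u ∈ S, ∑ v ∈ Sᶜ, (if u = x then c u v + η else c u v)) =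
      (∑ u ∈ S, ∑ v ∈ Sᶜ, c u v) + η * (Sᶜ.card : ℝ) := by
    intro S hxS
    have h1 : ∀ u ∈ S, ∑ v ∈ Sᶜ, (if u = x then c u v + η else c u v)
        = (∑ v ∈ Sᶜ, c u v) + (if u = x then η * (Sᶜ.card : ℝ) else 0) := by
      intro u _
      by_cases h : u = x <;> simp [h, Finset.sum_add_distrib, mul_comm]
    rw [Finset.sum_congr rfl h1, Finset.sum_add_distrib, Finset.sum_ite_eq' S x]
    simp [hxS]
  have h1 : (∑ u ∈ X, ∑ v ∈ Xᶜ, c u v) + η * (Xᶜ.card : ℝ)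
      ≤ (∑ u ∈ A, ∑ v ∈ Aᶜ, c u v) + η * (Aᶜ.card : ℝ) := by
    rw [← hsplit X hxX, ← hsplit A hxA]; exact key
  have hAc : Aᶜ ⊆ Xᶜ := Finset.compl_subset_compl.2 Finset.subset_union_left
  have hAc' : Aᶜ ⊆ X'ᶜ := Finset.compl_subset_compl.2 Finset.subset_union_right
  have h2 : (∑ u ∈ A, ∑ v ∈ Aᶜ, c u v)
      ≤ (∑ u ∈ X, ∑ v ∈ Xᶜ, c u v) + ∑ u ∈ X', ∑ v ∈ X'ᶜ, c u v := by
    have hdisj : Disjoint X (X' \ X) := Finset.disjoint_sdiff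
    have hAeq : A = X ∪ (X' \ X) := by rw [hA, Finset.union_sdiff_self_eq_union]
    rw [hAeq, Finset.sum_union hdisj, ← hAeq]
    have p1 : ∑ u ∈ X, ∑ v ∈ Aᶜ, c u v ≤ ∑ u ∈ X, ∑ v ∈ Xᶜ, c u v :=
      Finset.sum_le_sum fun u _ =>
        Finset.sum_le_sum_of_subset_of_nonneg hAc fun v _ _ => hc u v
    have p2 : ∑ u ∈ X' \ X, ∑ v ∈ Aᶜ, c u v ≤ ∑ u ∈ X', ∑ v ∈ X'ᶜ, c u v := by
      calc ∑ u ∈ X' \ X, ∑ v ∈ Aᶜ, c u v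
          ≤ ∑ u ∈ X', ∑ v ∈ Aᶜ, c u v :=
            Finset.sum_le_sum_of_subset_of_nonneg Finset.sdiff_subset
              (fun u _ _ => Finset.sum_nonneg fun v _ => hc u v)
        _ ≤ ∑ u ∈ X', ∑ v ∈ X'ᶜ, c u v :=
            Finset.sum_le_sum fun u _ =>
              Finset.sum_le_sum_of_subset_of_nonneg hAc' fun v _ _ => hc u v
    linarith
  have hcard : (Xᶜ.card : ℝ) = (Aᶜ.card : ℝ) + ((X' \ X).card : ℝ) := by
    have hset : Xᶜ = Aᶜ ∪ (X' \ X) := by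
      ext v
      simp only [Finset.mem_union, Finset.mem_compl, Finset.mem_sdiff, hA]
      tauto
    have hd : Disjoint Aᶜ (X' \ X) := by
      rw [Finset.disjoint_left]
      intro v hv hv'
      simp only [Finset.mem_compl, hA, Finset.mem_union, Finset.mem_sdiff] at hv hv'
      tauto
    rw [hset, Finset.card_union_of_disjoint hd]
    push_cast; ring
  nlinarith [hmin, h1, h2, hcard]
end

section
/- Let G be an edge-capacitated directed graph on a finite vertex set V of size n with integer capacities c : V × V → ℕ, let x ≠ y ∈ V, and let α ≥ 1 be an integer. Let OPT denote the minimum value of an x-y edge-cut of G. Then there exists an x-y edge-cut (X,Y) of G with c(X,Y) ≤ OPT + α such that every x-y edge-cut (X',Y') of G satisfies |X' ∖ X| ≤ (c(X',Y') − OPT) · n/α. -/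
open Classical Finset

variable {V : Type*}

private def cutVal [Fintype V] [DecidableEq V] (c : V → V → ℕ) (A : Finset V) : ℕ :=
  ∑ u ∈ A, ∑ v ∈ Aᶜ, c u v

private lemma cutVal_eq [Fintype V] [DecidableEq V] (c : V → V → ℕ) (A : Finset V) :
    cutVal c A = ∑ u : V, ∑ v : V, if u ∈ A ∧ v ∉ A then c u v else 0 := by
  unfold cutVal
  symm
  calc ∑ u : V, ∑ v : V, (if u ∈ A ∧ v ∉ A then c u v else 0)
      = ∑ u : V, (if u ∈ A then ∑ v : V, (if v ∉ A then c u v else 0) else 0) := by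
        apply Finset.sum_congr rfl; intro u _
        by_cases hu : u ∈ A <;> simp [hu]
    _ = ∑ u ∈ A, ∑ v : V, (if v ∉ A then c u v else 0) := by
        rw [Finset.sum_ite_mem, Finset.univ_inter]
    _ = ∑ u ∈ A, ∑ v ∈ Aᶜ, c u v := by
        apply Finset.sum_congr rfl; intro u _
        simp only [← Finset.mem_compl]
        rw [Finset.sum_ite_mem, Finset.univ_inter]

private lemma cut_submod [Fintype V] [DecidableEq V] (c : V → V → ℕ) (A B : Finset V) :
    cutVal c (A ∪ B) + cutVal c (A ∩ B) ≤ cutVal c A + cutVal c B := by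
  simp only [cutVal_eq]
  rw [← Finset.sum_add_distrib, ← Finset.sum_add_distrib]
  apply Finset.sum_le_sum; intro u _
  rw [← Finset.sum_add_distrib, ← Finset.sum_add_distrib]
  apply Finset.sum_le_sum; intro v _
  by_cases hua : u ∈ A <;> by_cases hub : u ∈ B <;> by_cases hva : v ∈ A <;> by_cases hvb : v ∈ B <;>
    simp [Finset.mem_union, Finset.mem_inter, hua, hub, hva, hvb]

/-- **Existence of an approximate furthest min-cut (edge version).** Let `G` be an
edge-capacitated directed graph on `n` vertices with integer capacities `c`, let `x ≠ y`, let
`α ≥ 1` be an integer, and let `OPT` be the minimum `x`-`y` edge-cut value. Then there is an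
`x`-`y` edge-cut `(X, Xᶜ)` with `c(X, Xᶜ) ≤ OPT + α` such that every `x`-`y` edge-cut
`(X', X'ᶜ)` satisfies `|X' \ X| ≤ (c(X', X'ᶜ) − OPT) · n / α`. -/
theorem stmt_7 [Fintype V] [DecidableEq V] (c : V → V → ℕ) (x y : V) (hxy : x ≠ y)
    (α : ℕ) (hα : 1 ≤ α) (OPT : ℕ)
    (hOPT_ex : ∃ X : Finset V, x ∈ X ∧ y ∉ X ∧ ∑ u ∈ X, ∑ v ∈ Xᶜ, c u v = OPT)
    (hOPT_min : ∀ X : Finset V, x ∈ X → y ∉ X → OPT ≤ ∑ u ∈ X, ∑ v ∈ Xᶜ, c u v) :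
    ∃ X : Finset V, x ∈ X ∧ y ∉ X ∧
      (∑ u ∈ X, ∑ v ∈ Xᶜ, c u v) ≤ OPT + α ∧
      ∀ X' : Finset V, x ∈ X' → y ∉ X' →
        ((X' \ X).card : ℝ) ≤
          (((∑ u ∈ X', ∑ v ∈ X'ᶜ, c u v : ℕ) : ℝ) - (OPT : ℝ)) *
            (Fintype.card V : ℝ) / (α : ℝ) := by
  classical
  set n : ℕ := Fintype.card V with hn
  have hn1 : 1 ≤ n := Fintype.card_pos_iff.mpr ⟨x⟩
  obtain ⟨X₀, hx₀, hy₀, hc₀⟩ := hOPT_ex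
  set S : Finset (Finset V) := Finset.univ.filter (fun X => x ∈ X ∧ y ∉ X) with hS
  have hX₀S : X₀ ∈ S := by simp [hS, hx₀, hy₀]
  have hSne : S.Nonempty := ⟨X₀, hX₀S⟩
  set f : Finset V → ℤ := fun X => (α : ℤ) * X.card - (n : ℤ) * cutVal c X with hf
  obtain ⟨X, hXS, hXmax⟩ := S.exists_max_image f hSne
  have hxX : x ∈ X := by simp [hS] at hXS; exact hXS.1
  have hyX : y ∉ X := by simp [hS] at hXS; exact hXS.2
  refine ⟨X, hxX, hyX, ?_, ?_⟩
  · -- cut value bound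
    have h0 := hXmax X₀ hX₀S
    have hcard : (X.card : ℤ) ≤ n := by exact_mod_cast Finset.card_le_univ X
    have hc0' : (cutVal c X₀ : ℤ) = OPT := by exact_mod_cast hc₀
    have : (n : ℤ) * cutVal c X ≤ (n : ℤ) * (OPT + α) := by
      simp only [hf, hc0'] at h0
      nlinarith [Int.ofNat_nonneg X₀.card, Int.ofNat_nonneg α]
    have hnpos : (0 : ℤ) < n := by exact_mod_cast hn1
    have := le_of_mul_le_mul_left this hnpos
    exact_mod_cast this
  · intro X' hxX' hyX'
    set U := X' ∪ X with hU
    set I := X' ∩ X with hI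
    have hUS : U ∈ S := by
      refine Finset.mem_filter.mpr ⟨Finset.mem_univ _, Finset.mem_union_left _ hxX', ?_⟩
      simp [hU, hyX, hyX']
    have hIx : x ∈ I := Finset.mem_inter.mpr ⟨hxX', hxX⟩
    have hIy : y ∉ I := fun h => hyX (Finset.mem_inter.mp h).2
    have hmax := hXmax U hUS
    have hsub := cut_submod c X' X
    have hImin : OPT ≤ cutVal c I := hOPT_min I hIx hIy
    have hcardU : (X' \ X).card + X.card = U.card := Finset.card_sdiff_add_card X' X
    -- key integer inequality
    have key : (α : ℤ) * (X' \ X).card ≤ (n : ℤ) * ((cutVal c X' : ℤ) - OPT) := by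
      simp only [hf] at hmax
      have h1 : (α : ℤ) * U.card - (n : ℤ) * cutVal c U ≤ (α : ℤ) * X.card - (n : ℤ) * cutVal c X := hmax
      have h2 : (cutVal c U : ℤ) + cutVal c I ≤ cutVal c X' + cutVal c X := by
        have : cutVal c U + cutVal c I ≤ cutVal c X' + cutVal c X := by
          simpa [hU, hI] using hsub
        exact_mod_cast this
      have h3 : (OPT : ℤ) ≤ cutVal c I := by exact_mod_cast hImin
      have h4 : ((X' \ X).card : ℤ) + X.card = U.card := by exact_mod_cast hcardU
      nlinarith
    have hαpos : (0 : ℝ) < α := by exact_mod_cast hα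
    rw [le_div_iff₀ hαpos]
    have keyR : (α : ℝ) * ((X' \ X).card : ℝ) ≤ (n : ℝ) * (((∑ u ∈ X', ∑ v ∈ X'ᶜ, c u v : ℕ) : ℝ) - (OPT : ℝ)) := by
      have h' : (((α : ℤ) * (X' \ X).card : ℤ) : ℝ) ≤ (((n : ℤ) * ((cutVal c X' : ℤ) - OPT) : ℤ) : ℝ) := by
        exact_mod_cast key
      push_cast at h'
      simpa [cutVal] using h'
    nlinarith
end

section
/- Let G = (V,E) be a finite directed graph on n ≥ 2 vertices with integer vertex weights w : V → ℕ, let x ≠ y be vertices with (x,y) ∉ E, and let α ≥ 1 be an integer. Let OPT denote the minimum value of an x-y vertex-cut of G. Then there exists an x-y vertex-cut (L,S,R) of G with w(S) ≤ OPT + 2α such that every x-y vertex-cut (L',S',R') of G satisfies |(L' ∪ S') ∖ (L ∪ S)| ≤ (w(S') − OPT) · n/α. -/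
open Classical Finset

variable {V : Type*}

section Aux
variable [Fintype V] [DecidableEq V] {E : V → V → Prop} {L S R L' S' R' : Finset V} {x y : V}

lemma cut_cover (h : IsSTVertexCut E L S R x y) (v : V) : v ∈ L ∨ v ∈ S ∨ v ∈ R := by
  have := h.1.2.2.2.2.2.1
  have hv : v ∈ L ∪ S ∪ R := this ▸ Finset.mem_univ v
  simpa [Finset.mem_union, or_assoc] using hv

lemma join_cut (h : IsSTVertexCut E L S R x y) (h' : IsSTVertexCut E L' S' R' x y) :
    IsSTVertexCut E (L ∪ L') ((S ∪ S') \ (L ∪ L')) (R ∩ R') x y := by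
  obtain ⟨⟨-, -, hLS, hLR, hSR, hu, hEc⟩, hx, hy⟩ := h
  obtain ⟨⟨-, -, hLS', hLR', hSR', hu', hEc'⟩, hx', hy'⟩ := h'
  have hcov : ∀ v : V, v ∈ L ∨ v ∈ S ∨ v ∈ R := by
    intro v; have hv : v ∈ L ∪ S ∪ R := hu ▸ Finset.mem_univ v
    simpa [Finset.mem_union, or_assoc] using hv
  have hcov' : ∀ v : V, v ∈ L' ∨ v ∈ S' ∨ v ∈ R' := by
    intro v; have hv : v ∈ L' ∪ S' ∪ R' := hu' ▸ Finset.mem_univ v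
    simpa [Finset.mem_union, or_assoc] using hv
  refine ⟨⟨?_, ?_, ?_, ?_, ?_, ?_, ?_⟩, ?_, ?_⟩
  · exact Finset.ne_empty_of_mem (Finset.mem_union_left _ hx)
  · exact Finset.ne_empty_of_mem (Finset.mem_inter.mpr ⟨hy, hy'⟩)
  · rw [Finset.disjoint_left]; intro a ha hb
    exact (Finset.mem_sdiff.mp hb).2 ha
  · rw [Finset.disjoint_left]; intro a ha hb
    rcases Finset.mem_union.mp ha with h1 | h1
    · exact Finset.disjoint_left.mp hLR h1 (Finset.mem_inter.mp hb).1
    · exact Finset.disjoint_left.mp hLR' h1 (Finset.mem_inter.mp hb).2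
  · rw [Finset.disjoint_left]; intro a ha hb
    obtain ⟨h1, -⟩ := Finset.mem_sdiff.mp ha
    obtain ⟨h2, h3⟩ := Finset.mem_inter.mp hb
    rcases Finset.mem_union.mp h1 with h1 | h1
    · exact Finset.disjoint_left.mp hSR h1 h2
    · exact Finset.disjoint_left.mp hSR' h1 h3
  · ext v
    simp only [Finset.mem_union, Finset.mem_sdiff, Finset.mem_inter, Finset.mem_univ,
      iff_true]
    have o1 := hcov v; have o2 := hcov' v
    tauto
  · intro u hu'' v hv
    obtain ⟨h2, h3⟩ := Finset.mem_inter.mp hv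
    rcases Finset.mem_union.mp hu'' with h1 | h1
    · exact hEc u h1 v h2
    · exact hEc' u h1 v h3
  · exact Finset.mem_union_left _ hx
  · exact Finset.mem_inter.mpr ⟨hy, hy'⟩

lemma meet_cut (h : IsSTVertexCut E L S R x y) (h' : IsSTVertexCut E L' S' R' x y) :
    IsSTVertexCut E (L ∩ L') (((L ∪ S) ∩ (L' ∪ S')) \ (L ∩ L')) (R ∪ R') x y := by
  obtain ⟨⟨-, -, hLS, hLR, hSR, hu, hEc⟩, hx, hy⟩ := h
  obtain ⟨⟨-, -, hLS', hLR', hSR', hu', hEc'⟩, hx', hy'⟩ := h'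
  have hcov : ∀ v : V, v ∈ L ∨ v ∈ S ∨ v ∈ R := by
    intro v; have hv : v ∈ L ∪ S ∪ R := hu ▸ Finset.mem_univ v
    simpa [Finset.mem_union, or_assoc] using hv
  have hcov' : ∀ v : V, v ∈ L' ∨ v ∈ S' ∨ v ∈ R' := by
    intro v; have hv : v ∈ L' ∪ S' ∪ R' := hu' ▸ Finset.mem_univ v
    simpa [Finset.mem_union, or_assoc] using hv
  refine ⟨⟨?_, ?_, ?_, ?_, ?_, ?_, ?_⟩, ?_, ?_⟩
  · exact Finset.ne_empty_of_mem (Finset.mem_inter.mpr ⟨hx, hx'⟩)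
  · exact Finset.ne_empty_of_mem (Finset.mem_union_left _ hy)
  · rw [Finset.disjoint_left]; intro a ha hb
    exact (Finset.mem_sdiff.mp hb).2 ha
  · rw [Finset.disjoint_left]; intro a ha hb
    obtain ⟨h1, h2⟩ := Finset.mem_inter.mp ha
    rcases Finset.mem_union.mp hb with h3 | h3
    · exact Finset.disjoint_left.mp hLR h1 h3
    · exact Finset.disjoint_left.mp hLR' h2 h3
  · rw [Finset.disjoint_left]; intro a ha hb
    obtain ⟨h1, -⟩ := Finset.mem_sdiff.mp ha
    obtain ⟨h2, h3⟩ := Finset.mem_inter.mp h1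
    rcases Finset.mem_union.mp hb with h4 | h4
    · rcases Finset.mem_union.mp h2 with h5 | h5
      · exact Finset.disjoint_left.mp hLR h5 h4
      · exact Finset.disjoint_left.mp hSR h5 h4
    · rcases Finset.mem_union.mp h3 with h5 | h5
      · exact Finset.disjoint_left.mp hLR' h5 h4
      · exact Finset.disjoint_left.mp hSR' h5 h4
  · ext v
    simp only [Finset.mem_union, Finset.mem_sdiff, Finset.mem_inter, Finset.mem_univ,
      iff_true]
    have o1 := hcov v; have o2 := hcov' v
    tauto
  · intro u hu'' v hv
    obtain ⟨h1, h2⟩ := Finset.mem_inter.mp hu''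
    rcases Finset.mem_union.mp hv with h3 | h3
    · exact hEc u h1 v h3
    · exact hEc' u h2 v h3
  · exact Finset.mem_inter.mpr ⟨hx, hx'⟩
  · exact Finset.mem_union_left _ hy

lemma modular_sum (w : V → ℕ) (hLS : Disjoint L S) (hLS' : Disjoint L' S') :
    ((∑ v ∈ (S ∪ S') \ (L ∪ L'), w v) + ∑ v ∈ ((L ∪ S) ∩ (L' ∪ S')) \ (L ∩ L'), w v)
      = (∑ v ∈ S, w v) + ∑ v ∈ S', w v := by
  classical
  have key : ∀ A : Finset V, ∑ v ∈ A, w v = ∑ v ∈ univ, ite (v ∈ A) (w v) 0 := by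
    intro A
    rw [Finset.sum_ite_mem, Finset.univ_inter]
  simp only [key, ← Finset.sum_add_distrib]
  refine Finset.sum_congr rfl fun v _ => ?_
  have h1 : ¬(v ∈ L ∧ v ∈ S) := fun ⟨a, b⟩ => Finset.disjoint_left.mp hLS a b
  have h2 : ¬(v ∈ L' ∧ v ∈ S') := fun ⟨a, b⟩ => Finset.disjoint_left.mp hLS' a b
  by_cases ha : v ∈ L <;> by_cases hb : v ∈ S <;> by_cases hc : v ∈ L' <;> by_cases hd : v ∈ S' <;>
    simp_all [Finset.mem_sdiff, Finset.mem_union, Finset.mem_inter]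

lemma card_split (h : IsSTVertexCut E L S R x y) (h' : IsSTVertexCut E L' S' R' x y) :
    R.card = (R ∩ R').card + ((L' ∪ S') \ (L ∪ S)).card := by
  have hSR := h.1.2.2.2.2.1
  have hLR := h.1.2.2.2.1
  have hSR' := h'.1.2.2.2.2.1
  have hLR' := h'.1.2.2.2.1
  have hcov' : ∀ v : V, v ∈ L' ∨ v ∈ S' ∨ v ∈ R' := fun v => cut_cover h' v
  have heq : R = (R ∩ R') ∪ ((L' ∪ S') \ (L ∪ S)) := by
    ext v
    simp only [Finset.mem_union, Finset.mem_sdiff, Finset.mem_inter]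
    constructor
    · intro hv
      have hnl : v ∉ L := fun hl => Finset.disjoint_left.mp hLR hl hv
      have hns : v ∉ S := fun hs => Finset.disjoint_left.mp hSR hs hv
      rcases hcov' v with h5 | h5 | h5
      · exact Or.inr ⟨Or.inl h5, by simp [hnl, hns]⟩
      · exact Or.inr ⟨Or.inr h5, by simp [hnl, hns]⟩
      · exact Or.inl ⟨hv, h5⟩
    · rintro (⟨hv, -⟩ | ⟨h5, h6⟩)
      · exact hv
      · rcases cut_cover h v with h7 | h7 | h7
        · exact absurd (Or.inl h7) h6
        · exact absurd (Or.inr h7) h6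
        · exact h7
  have hdisj : Disjoint (R ∩ R') ((L' ∪ S') \ (L ∪ S)) := by
    rw [Finset.disjoint_left]
    intro a ha hb
    obtain ⟨-, h2⟩ := Finset.mem_inter.mp ha
    obtain ⟨h3, -⟩ := Finset.mem_sdiff.mp hb
    rcases Finset.mem_union.mp h3 with h4 | h4
    · exact Finset.disjoint_left.mp hLR' h4 h2
    · exact Finset.disjoint_left.mp hSR' h4 h2
  have hc := Finset.card_union_of_disjoint hdisj
  rw [← heq] at hc
  exact hc

end Aux

/-- **Existence of an approximate furthest min-cut (vertex version).** Let `G = (V,E)` be a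
directed graph on `n ≥ 2` vertices with integer vertex weights, `x ≠ y` with `(x,y) ∉ E`,
`α ≥ 1` an integer, and `OPT` the minimum `x`-`y` vertex-cut value. Then there is an `x`-`y`
vertex-cut `(L,S,R)` with `w(S) ≤ OPT + 2α` such that every `x`-`y` vertex-cut `(L',S',R')`
satisfies `|(L' ∪ S') \ (L ∪ S)| ≤ (w(S') − OPT) · n / α`. -/
theorem stmt_8 [Fintype V] [DecidableEq V] (E : V → V → Prop) (w : V → ℕ)
    (hn : 2 ≤ Fintype.card V) (x y : V) (hxy : x ≠ y) (hE : ¬ E x y)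
    (α : ℕ) (hα : 1 ≤ α) (OPT : ℕ)
    (hOPT_ex : ∃ L S R : Finset V, IsSTVertexCut E L S R x y ∧ ∑ v ∈ S, w v = OPT)
    (hOPT_min : ∀ L S R : Finset V, IsSTVertexCut E L S R x y → OPT ≤ ∑ v ∈ S, w v) :
    ∃ L S R : Finset V, IsSTVertexCut E L S R x y ∧
      (∑ v ∈ S, w v) ≤ OPT + 2 * α ∧
      ∀ L' S' R' : Finset V, IsSTVertexCut E L' S' R' x y →
        (((L' ∪ S') \ (L ∪ S)).card : ℝ) ≤
          (((∑ v ∈ S', w v : ℕ) : ℝ) - (OPT : ℝ)) * (Fintype.card V : ℝ) / (α : ℝ) := by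
    classical
  obtain ⟨L0, S0, R0, h0, hs0⟩ := hOPT_ex
  set n := Fintype.card V with hn_def
  set Φ : Finset V × Finset V × Finset V → ℕ :=
    fun p => n * (∑ v ∈ p.2.1, w v) + α * p.2.2.card with hΦ
  set cuts : Finset (Finset V × Finset V × Finset V) :=
    univ.filter (fun p => IsSTVertexCut E p.1 p.2.1 p.2.2 x y) with hcuts
  have hmem : ∀ p : Finset V × Finset V × Finset V,
      p ∈ cuts ↔ IsSTVertexCut E p.1 p.2.1 p.2.2 x y := by
    intro p; simp [hcuts]
  have hne : cuts.Nonempty := ⟨(L0, S0, R0), (hmem _).mpr h0⟩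
  obtain ⟨p, hp, hmin⟩ := cuts.exists_min_image Φ hne
  obtain ⟨L, S, R⟩ := p
  have hcut : IsSTVertexCut E L S R x y := (hmem _).mp hp
  refine ⟨L, S, R, hcut, ?_, ?_⟩
  · -- weight bound
    have h1 : Φ (L, S, R) ≤ Φ (L0, S0, R0) := hmin _ ((hmem _).mpr h0)
    have hr0 : R0.card ≤ n := Finset.card_le_univ R0
    have h2 : n * (∑ v ∈ S, w v) ≤ n * (OPT + α) := by
      have := Finset.card_le_univ R0
      simp only [hΦ, hs0] at h1
      calc n * (∑ v ∈ S, w v) ≤ n * OPT + α * R0.card := by omega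
        _ ≤ n * OPT + α * n := by
            exact Nat.add_le_add_left (Nat.mul_le_mul_left α hr0) _
        _ = n * (OPT + α) := by ring
    have hnpos : 0 < n := by omega
    have h3 : (∑ v ∈ S, w v) ≤ OPT + α := Nat.le_of_mul_le_mul_left h2 hnpos
    omega
  · intro L' S' R' h'
    have hjoin := join_cut hcut h'
    have hmeet := meet_cut hcut h'
    have hminj : Φ (L, S, R) ≤ Φ (L ∪ L', (S ∪ S') \ (L ∪ L'), R ∩ R') :=
      hmin _ ((hmem _).mpr hjoin)
    have hmod := modular_sum (L := L) (S := S) (L' := L') (S' := S') w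
      hcut.1.2.2.1 h'.1.2.2.1
    have hcardsplit := card_split hcut h'
    simp only [hΦ] at hminj
    have hoptm : OPT ≤ ∑ v ∈ ((L ∪ S) ∩ (L' ∪ S')) \ (L ∩ L'), w v :=
      hOPT_min _ _ _ hmeet
    set s := ∑ v ∈ S, w v
    set s' := ∑ v ∈ S', w v
    set sj := ∑ v ∈ (S ∪ S') \ (L ∪ L'), w v
    set sm := ∑ v ∈ ((L ∪ S) ∩ (L' ∪ S')) \ (L ∩ L'), w v
    set d := ((L' ∪ S') \ (L ∪ S)).card
    set rj := (R ∩ R').card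
    -- key natural-number inequality : α * d + n * OPT ≤ n * s'
    have key : α * d + n * OPT ≤ n * s' := by
      have e1 : n * sj + n * sm = n * s + n * s' := by
        rw [← Nat.mul_add, ← Nat.mul_add, hmod]
      have e2 : α * R.card = α * rj + α * d := by
        rw [hcardsplit, Nat.mul_add]
      have e3 : n * OPT ≤ n * sm := Nat.mul_le_mul_left n hoptm
      omega
    have hαpos : (0 : ℝ) < (α : ℝ) := by exact_mod_cast hα
    rw [le_div_iff₀ hαpos]
    have hC : (α : ℝ) * d + n * OPT ≤ n * s' := by exact_mod_cast key
    nlinarith [hC]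
end

section
/- Let G be a simple undirected graph on N vertices. If the girth of G is at least 4⌈log₂ N⌉ (in particular, if G contains no cycle at all), then G has at most 2N edges. -/
open SimpleGraph Finset

namespace Stmt9

variable {V : Type*}

lemma walk_len0 {G : SimpleGraph V} {x y : V} (w : G.Walk x y) (h : w.length = 0) : x = y := by
  cases w with
  | nil => rfl
  | cons h' p => simp at h

/-- Two distinct paths between the same endpoints give a cycle of length at most the
sum of their lengths. -/
lemma cycle_of_two_paths {G : SimpleGraph V} {u v : V} {p q : G.Walk u v}
    (hp : p.IsPath) (hq : q.IsPath) (hne : p ≠ q) :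
    ∃ (a : V) (c : G.Walk a a), c.IsCycle ∧ c.length ≤ p.length + q.length := by
  classical
  set s : Set (Sym2 V) := ↑(p.edges.toFinset ∪ q.edges.toFinset) with hs
  have hmem : ∀ e, e ∈ s ↔ (e ∈ p.edges ∨ e ∈ q.edges) := by
    intro e
    simp [hs]
  set H : SimpleGraph V := SimpleGraph.fromEdgeSet s with hH
  have hle : H ≤ G := by
    intro a b hab
    rw [hH, SimpleGraph.fromEdgeSet_adj, hmem] at hab
    rcases hab.1 with h1 | h1
    · exact p.edges_subset_edgeSet h1
    · exact q.edges_subset_edgeSet h1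
  have hpe : ∀ e ∈ p.edges, e ∈ H.edgeSet := by
    intro e he
    rw [hH, SimpleGraph.edgeSet_fromEdgeSet]
    exact ⟨(hmem e).2 (Or.inl he), G.not_isDiag_of_mem_edgeSet (p.edges_subset_edgeSet he)⟩
  have hqe : ∀ e ∈ q.edges, e ∈ H.edgeSet := by
    intro e he
    rw [hH, SimpleGraph.edgeSet_fromEdgeSet]
    exact ⟨(hmem e).2 (Or.inr he), G.not_isDiag_of_mem_edgeSet (q.edges_subset_edgeSet he)⟩
  have key : ∀ (r : G.Walk u v) (hr : ∀ e ∈ r.edges, e ∈ H.edgeSet),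
      Walk.map (SimpleGraph.Hom.ofLE hle) (r.transfer H hr) = r := by
    intro r hr
    rw [← Walk.transfer_eq_map_ofLE _ (fun e he =>
      SimpleGraph.edgeSet_mono hle ((r.transfer H hr).edges_subset_edgeSet he)) hle,
      Walk.transfer_transfer, Walk.transfer_self]
  have hne' : p.transfer H hpe ≠ q.transfer H hqe := by
    intro h
    apply hne
    rw [← key p hpe, ← key q hqe, h]
  have hnA : ¬ H.IsAcyclic := by
    intro hA
    apply hne'
    have := SimpleGraph.isAcyclic_iff_path_unique.mp hA
      ⟨p.transfer H hpe, hp.transfer hpe⟩ ⟨q.transfer H hqe, hq.transfer hqe⟩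
    exact congrArg Subtype.val this
  obtain ⟨a, w, hw, -⟩ := SimpleGraph.exists_girth_eq_length.mpr hnA
  refine ⟨a, w.mapLe hle, hw.mapLe hle, ?_⟩
  have hlen : (w.mapLe hle).length = w.length := by
    simp [Walk.mapLe]
  rw [hlen]
  have hnod : w.edges.Nodup := hw.isTrail.edges_nodup
  have hsub : w.edges.toFinset ⊆ p.edges.toFinset ∪ q.edges.toFinset := by
    intro e he
    rw [List.mem_toFinset] at he
    have h1 := w.edges_subset_edgeSet he
    rw [hH, SimpleGraph.edgeSet_fromEdgeSet] at h1
    rcases (hmem e).1 h1.1 with h2 | h2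
    · exact Finset.mem_union_left _ (List.mem_toFinset.2 h2)
    · exact Finset.mem_union_right _ (List.mem_toFinset.2 h2)
  calc w.length = w.edges.length := (w.length_edges).symm
    _ = w.edges.toFinset.card := (List.toFinset_card_of_nodup hnod).symm
    _ ≤ (p.edges.toFinset ∪ q.edges.toFinset).card := Finset.card_le_card hsub
    _ ≤ p.edges.toFinset.card + q.edges.toFinset.card := Finset.card_union_le _ _
    _ ≤ p.edges.length + q.edges.length :=
        Nat.add_le_add (List.toFinset_card_le _) (List.toFinset_card_le _)
    _ = p.length + q.length := by rw [p.length_edges, q.length_edges]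


variable {V : Type*}

lemma walk_len0' {G : SimpleGraph V} {x y : V} (w : G.Walk x y) (h : w.length = 0) : x = y := by
  cases w with
  | nil => rfl
  | cons h' p => simp at h

lemma dist_le_dist_add_one {G : SimpleGraph V} {v u w : V} (h : G.Adj u w)
    (hr : G.Reachable v u) : G.dist v w ≤ G.dist v u + 1 := by
  obtain ⟨p, hp, hl⟩ := hr.exists_path_of_dist
  have := SimpleGraph.dist_le (p.concat h)
  rwa [Walk.length_concat, hl] at this

lemma not_mem_support_of_shortest {G : SimpleGraph V} {v a u : V} (p : G.Walk v a)
    (hl : p.length = G.dist v a) (hd : G.dist v a ≤ G.dist v u) (hne : u ≠ a) :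
    u ∉ p.support := by
  classical
  intro h
  have h1 : G.dist v u ≤ (p.takeUntil u h).length := SimpleGraph.dist_le _
  have h2 : (p.takeUntil u h).length ≤ p.length := p.length_takeUntil_le h
  have h5 : (p.takeUntil u h).length + (p.dropUntil u h).length = p.length := by
    rw [← Walk.length_append, p.take_spec h]
  exact hne (walk_len0' (p.dropUntil u h) (by omega))

lemma eq_of_near_nbrs {G : SimpleGraph V} {v u : V} {m : ℕ}
    (hg : ∀ (x : V) (c : G.Walk x x), c.IsCycle → 2 * m + 2 < c.length)
    (hu : G.dist v u = m) {a b : V}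
    (ha : G.Adj u a) (hb : G.Adj u b)
    (hra : G.Reachable v a) (hrb : G.Reachable v b)
    (hda : G.dist v a ≤ m) (hdb : G.dist v b ≤ m) : a = b := by
  by_contra hab
  obtain ⟨pa, hpa, hla⟩ := hra.exists_path_of_dist
  obtain ⟨pb, hpb, hlb⟩ := hrb.exists_path_of_dist
  have hua : u ∉ pa.support :=
    not_mem_support_of_shortest pa hla (by omega) ha.ne
  have hub : u ∉ pb.support :=
    not_mem_support_of_shortest pb hlb (by omega) hb.ne
  set W1 : G.Walk u v := Walk.cons ha pa.reverse with hW1def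
  set W2 : G.Walk u v := Walk.cons hb pb.reverse with hW2def
  have hW1 : W1.IsPath := by
    rw [hW1def, Walk.cons_isPath_iff]
    exact ⟨hpa.reverse, by rwa [Walk.support_reverse, List.mem_reverse]⟩
  have hW2 : W2.IsPath := by
    rw [hW2def, Walk.cons_isPath_iff]
    exact ⟨hpb.reverse, by rwa [Walk.support_reverse, List.mem_reverse]⟩
  have hne12 : W1 ≠ W2 := by
    intro h
    have h1 := congrArg Walk.support h
    rw [hW1def, hW2def, Walk.support_cons, Walk.support_cons] at h1
    have h2 : pa.reverse.support = pb.reverse.support := by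
      simpa using h1
    rw [Walk.support_eq_cons pa.reverse, Walk.support_eq_cons pb.reverse] at h2
    simp at h2
    exact hab h2.1
  obtain ⟨x, c, hc, hlen⟩ := cycle_of_two_paths hW1 hW2 hne12
  have hl1 : W1.length = pa.length + 1 := by
    rw [hW1def, Walk.length_cons, Walk.length_reverse]
  have hl2 : W2.length = pb.length + 1 := by
    rw [hW2def, Walk.length_cons, Walk.length_reverse]
  have := hg x c hc
  omega


lemma growth [Fintype V] (H : SimpleGraph V) [DecidableRel H.Adj] (v : V) (k : ℕ)
    (hk : 3 ≤ k)
    (hg : ∀ (x : V) (c : H.Walk x x), c.IsCycle → 4 * k ≤ c.length)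
    (hdeg : ∀ u, H.Reachable v u → 3 ≤ H.degree u) :
    3 * 2 ^ (2 * k - 3) ≤ Fintype.card V := by
  classical
  set L : ℕ → Finset V :=
    fun j => Finset.univ.filter (fun u => H.Reachable v u ∧ H.dist v u = j) with hL
  have memL : ∀ j u, u ∈ L j ↔ H.Reachable v u ∧ H.dist v u = j := by
    intro j u; simp [hL]
  have clA : ∀ (m : ℕ) (u : V), m ≤ 2 * k - 2 → H.dist v u = m → ∀ a b : V,
      H.Adj u a → H.Adj u b → H.Reachable v a → H.Reachable v b →
      H.dist v a ≤ m → H.dist v b ≤ m → a = b := by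
    intro m u hm hu a b
    exact eq_of_near_nbrs (m := m)
      (fun x c hc => by have := hg x c hc; omega) hu
  have step : ∀ j, 1 ≤ j → j + 1 ≤ 2 * k - 2 → 2 * (L j).card ≤ (L (j + 1)).card := by
    intro j hj1 hj2
    set C : V → Finset V :=
      fun u => (H.neighborFinset u).filter (fun w => H.dist v w = j + 1) with hC
    have memC : ∀ u w, w ∈ C u ↔ H.Adj u w ∧ H.dist v w = j + 1 := by
      intro u w; simp [hC, SimpleGraph.mem_neighborFinset]
    have hCsub : ∀ u ∈ L j, C u ⊆ L (j + 1) := by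
      intro u hu w hw
      rw [memC] at hw
      rw [memL] at hu ⊢
      exact ⟨hu.1.trans hw.1.reachable, hw.2⟩
    have hC2 : ∀ u ∈ L j, 2 ≤ (C u).card := by
      intro u hu
      rw [memL] at hu
      obtain ⟨hru, hdu⟩ := hu
      have hdeg3 : 3 ≤ (H.neighborFinset u).card := by
        rw [SimpleGraph.card_neighborFinset_eq_degree]; exact hdeg u hru
      have hsplit := Finset.card_filter_add_card_filter_not
        (s := H.neighborFinset u) (p := fun w => H.dist v w = j + 1)
      have hone : ((H.neighborFinset u).filter (fun w => ¬ H.dist v w = j + 1)).card ≤ 1 := by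
        rw [Finset.card_le_one]
        intro a ha b hb
        simp only [Finset.mem_filter, SimpleGraph.mem_neighborFinset] at ha hb
        obtain ⟨haj, hda⟩ := ha
        obtain ⟨hbj, hdb⟩ := hb
        have hra : H.Reachable v a := hru.trans haj.reachable
        have hrb : H.Reachable v b := hru.trans hbj.reachable
        have h1 : H.dist v a ≤ j + 1 := by
          have := dist_le_dist_add_one haj hru; omega
        have h2 : H.dist v b ≤ j + 1 := by
          have := dist_le_dist_add_one hbj hru; omega
        exact clA j u (by omega) hdu a b haj hbj hra hrb (by omega) (by omega)
      have : (C u).card + ((H.neighborFinset u).filter (fun w => ¬ H.dist v w = j + 1)).card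
          = (H.neighborFinset u).card := hsplit
      omega
    have hdisj : ∀ a ∈ L j, ∀ b ∈ L j, a ≠ b → Disjoint (C a) (C b) := by
      intro a ha b hb hne
      rw [Finset.disjoint_left]
      intro w hwa hwb
      rw [memC] at hwa hwb
      rw [memL] at ha hb
      obtain ⟨haw, hdw⟩ := hwa
      obtain ⟨hbw, -⟩ := hwb
      exact hne (clA (j + 1) w hj2 hdw a b haw.symm hbw.symm ha.1 hb.1
        (by omega) (by omega))
    calc 2 * (L j).card = ∑ _u ∈ L j, 2 := by rw [Finset.sum_const]; ring
      _ ≤ ∑ u ∈ L j, (C u).card := Finset.sum_le_sum hC2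
      _ = ((L j).biUnion C).card := (Finset.card_biUnion hdisj).symm
      _ ≤ (L (j + 1)).card := Finset.card_le_card (by
          intro w hw
          rw [Finset.mem_biUnion] at hw
          obtain ⟨u, hu, hwu⟩ := hw
          exact hCsub u hu hwu)
  have base : 3 ≤ (L 1).card := by
    have hsub : H.neighborFinset v ⊆ L 1 := by
      intro w hw
      rw [SimpleGraph.mem_neighborFinset] at hw
      rw [memL]
      exact ⟨hw.reachable, SimpleGraph.dist_eq_one_iff_adj.2 hw⟩
    calc 3 ≤ H.degree v := hdeg v (Reachable.refl v)
      _ = (H.neighborFinset v).card := (SimpleGraph.card_neighborFinset_eq_degree H v).symm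
      _ ≤ (L 1).card := Finset.card_le_card hsub
  have grow : ∀ j, 1 ≤ j → j ≤ 2 * k - 2 → 3 * 2 ^ (j - 1) ≤ (L j).card := by
    intro j
    induction j with
    | zero => omega
    | succ i ih =>
      intro h1 h2
      rcases Nat.lt_or_ge 0 i with h | h
      · have hih := ih (by omega) (by omega)
        have hstep := step i (by omega) (by omega)
        have hpow : 3 * 2 ^ (i + 1 - 1) = 2 * (3 * 2 ^ (i - 1)) := by
          have : i + 1 - 1 = (i - 1) + 1 := by omega
          rw [this, pow_succ]; ring
        omega
      · have : i = 0 := by omega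
        subst this
        simpa using base
  have final := grow (2 * k - 2) (by omega) le_rfl
  have hexp : 2 * k - 2 - 1 = 2 * k - 3 := by omega
  have hcard : (L (2 * k - 2)).card ≤ Fintype.card V := by
    simpa using Finset.card_le_card (Finset.filter_subset _ (Finset.univ : Finset V))
  rw [hexp] at final
  omega


lemma exists_good [Fintype V] [DecidableEq V] (G : SimpleGraph V) [DecidableRel G.Adj]
    (h : 2 * Fintype.card V < G.edgeFinset.card) :
    ∃ S : Finset V, S.Nonempty ∧ ∀ u ∈ S, 3 ≤ ((G.neighborFinset u) ∩ S).card := by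
  classical
  suffices Hgen : ∀ S : Finset V,
      2 * S.card < (G.edgeFinset.filter (fun e => ∀ x ∈ e, x ∈ S)).card →
      ∃ T : Finset V, T.Nonempty ∧ ∀ u ∈ T, 3 ≤ ((G.neighborFinset u) ∩ T).card by
    apply Hgen Finset.univ
    have h1 : (G.edgeFinset.filter (fun e => ∀ x ∈ e, x ∈ (Finset.univ : Finset V)))
        = G.edgeFinset := by
      apply Finset.filter_true_of_mem
      intro e _ x _
      exact Finset.mem_univ x
    rw [h1]
    simpa using h
  intro S
  induction S using Finset.strongInductionOn with
  | _ S ih =>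
    intro hS
    by_cases hgood : ∀ u ∈ S, 3 ≤ ((G.neighborFinset u) ∩ S).card
    · refine ⟨S, ?_, hgood⟩
      have h0 : 0 < (G.edgeFinset.filter (fun e => ∀ x ∈ e, x ∈ S)).card := by omega
      obtain ⟨e, he⟩ := Finset.card_pos.mp h0
      rw [Finset.mem_filter] at he
      exact ⟨e.out.1, he.2 e.out.1 (Sym2.out_fst_mem e)⟩
    · push_neg at hgood
      obtain ⟨w, hwS, hw2⟩ := hgood
      have hw2' : ((G.neighborFinset w) ∩ S).card ≤ 2 := by omega
      have hsub : S.erase w ⊂ S := Finset.erase_ssubset hwS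
      apply ih (S.erase w) hsub
      have hcard : (S.erase w).card = S.card - 1 := Finset.card_erase_of_mem hwS
      have hpos : 0 < S.card := Finset.card_pos.mpr ⟨w, hwS⟩
      have hsplit : (G.edgeFinset.filter (fun e => ∀ x ∈ e, x ∈ S)) ⊆
          (G.edgeFinset.filter (fun e => ∀ x ∈ e, x ∈ S.erase w)) ∪
          ((G.edgeFinset.filter (fun e => ∀ x ∈ e, x ∈ S)).filter (fun e => w ∈ e)) := by
        intro e he
        rw [Finset.mem_union]
        by_cases hwe : w ∈ e
        · right; rw [Finset.mem_filter]; exact ⟨he, hwe⟩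
        · left
          rw [Finset.mem_filter] at he ⊢
          refine ⟨he.1, fun x hx => Finset.mem_erase.2 ⟨fun hxw => hwe (hxw ▸ hx), he.2 x hx⟩⟩
      have himg : ((G.edgeFinset.filter (fun e => ∀ x ∈ e, x ∈ S)).filter (fun e => w ∈ e)) ⊆
          ((G.neighborFinset w) ∩ S).image (fun x => s(w, x)) := by
        intro e he
        revert he
        refine Sym2.ind (fun x y he => ?_) e
        simp only [Finset.mem_filter, SimpleGraph.mem_edgeFinset, SimpleGraph.mem_edgeSet] at he
        obtain ⟨⟨hadj, hmemS⟩, hwe⟩ := he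
        rw [Sym2.mem_iff] at hwe
        rw [Finset.mem_image]
        rcases hwe with rfl | rfl
        · refine ⟨y, ?_, rfl⟩
          rw [Finset.mem_inter, SimpleGraph.mem_neighborFinset]
          exact ⟨hadj, hmemS y (Sym2.mem_mk_right _ _)⟩
        · refine ⟨x, ?_, Sym2.eq_swap⟩
          rw [Finset.mem_inter, SimpleGraph.mem_neighborFinset]
          exact ⟨hadj.symm, hmemS x (Sym2.mem_mk_left _ _)⟩
      have h2 : ((G.edgeFinset.filter (fun e => ∀ x ∈ e, x ∈ S)).filter
          (fun e => w ∈ e)).card ≤ 2 :=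
        le_trans (Finset.card_le_card himg) (le_trans Finset.card_image_le hw2')
      have h3 := le_trans (Finset.card_le_card hsplit) (Finset.card_union_le _ _)
      omega


/-- The subgraph of `G` keeping only edges inside `S`. -/
def within (G : SimpleGraph V) (S : Finset V) : SimpleGraph V where
  Adj x y := G.Adj x y ∧ x ∈ S ∧ y ∈ S
  symm := ⟨fun x y ⟨h, hx, hy⟩ => ⟨h.symm, hy, hx⟩⟩
  loopless := ⟨fun x ⟨h, _, _⟩ => G.loopless.irrefl x h⟩

instance withinDecidable (G : SimpleGraph V) [DecidableRel G.Adj] (S : Finset V)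
    [DecidableEq V] : DecidableRel (within G S).Adj := fun x y =>
  inferInstanceAs (Decidable (G.Adj x y ∧ x ∈ S ∧ y ∈ S))

lemma within_le (G : SimpleGraph V) (S : Finset V) : within G S ≤ G :=
  fun _ _ h => h.1

lemma within_walk_mem (G : SimpleGraph V) (S : Finset V) {x y : V}
    (w : (within G S).Walk x y) (hx : x ∈ S) : y ∈ S := by
  induction w with
  | nil => exact hx
  | cons h p ih => exact ih h.2.2

end Stmt9

/-- A simple undirected graph on `N` vertices whose girth is at least `4⌈log₂ N⌉`
(in particular, an acyclic graph, whose girth is `∞`) has at most `2N` edges. -/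
theorem stmt_9 {V : Type*} [Fintype V] [DecidableEq V] (G : SimpleGraph V)
    [DecidableRel G.Adj] (N : ℕ) (hN : Fintype.card V = N)
    (hgirth : ((4 * ⌈Real.logb 2 (N : ℝ)⌉₊ : ℕ) : ℕ∞) ≤ G.girth) :
    G.edgeFinset.card ≤ 2 * N := by
  classical
  by_contra hcon
  push_neg at hcon
  subst hN
  set k := ⌈Real.logb 2 ((Fintype.card V : ℕ) : ℝ)⌉₊ with hkdef
  -- small cases
  by_cases hN5 : Fintype.card V ≤ 5
  · have h1 := G.card_edgeFinset_le_card_choose_two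
    rw [Nat.choose_two_right] at h1
    have h2 : Fintype.card V * (Fintype.card V - 1) ≤ Fintype.card V * 4 :=
      Nat.mul_le_mul_left (Fintype.card V) (by omega)
    omega
  push_neg at hN5
  have hk3 : 3 ≤ k := by
    have h2 : (2 : ℕ) < ⌈Real.logb 2 ((Fintype.card V : ℕ) : ℝ)⌉₊ := by
      rw [Nat.lt_ceil]
      have h4 : (4 : ℝ) < ((Fintype.card V : ℕ) : ℝ) := by
        exact_mod_cast (by omega : (4 : ℕ) < Fintype.card V)
      have hlog4 : Real.logb 2 4 = 2 := by
        rw [show (4 : ℝ) = 2 ^ (2 : ℕ) by norm_num, Real.logb_pow,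
          Real.logb_self_eq_one (by norm_num)]
        norm_num
      have h5 := Real.logb_lt_logb (b := 2) (by norm_num) (by norm_num : (0:ℝ) < 4) h4
      rw [hlog4] at h5
      exact_mod_cast h5
    omega
  have hcardpos : (0 : ℝ) < ((Fintype.card V : ℕ) : ℝ) := by
    exact_mod_cast (by omega : 0 < Fintype.card V)
  have hNk : Fintype.card V ≤ 2 ^ k := by
    have h1 : ((Fintype.card V : ℕ) : ℝ)
        = (2 : ℝ) ^ Real.logb 2 ((Fintype.card V : ℕ) : ℝ) :=
      (Real.rpow_logb (by norm_num) (by norm_num) hcardpos).symm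
    have h2 : Real.logb 2 ((Fintype.card V : ℕ) : ℝ) ≤ (k : ℝ) := Nat.le_ceil _
    have h3 : (2 : ℝ) ^ Real.logb 2 ((Fintype.card V : ℕ) : ℝ) ≤ (2 : ℝ) ^ (k : ℝ) :=
      Real.rpow_le_rpow_of_exponent_le (by norm_num) h2
    rw [Real.rpow_natCast] at h3
    have h4 : ((Fintype.card V : ℕ) : ℝ) ≤ ((2 ^ k : ℕ) : ℝ) := by
      rw [h1]; push_cast; exact h3
    exact_mod_cast h4
  -- cycle length bound in G
  have hgirthN : 4 * k ≤ G.girth := by exact_mod_cast hgirth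
  have hcycG : ∀ (x : V) (c : G.Walk x x), c.IsCycle → 4 * k ≤ c.length := by
    intro x c hc
    have hnA : ¬ G.IsAcyclic := fun hA => hA c hc
    have h1 : G.egirth ≤ (c.length : ℕ∞) := by
      rw [SimpleGraph.egirth]
      exact iInf_le_of_le x (iInf_le_of_le c (iInf_le_of_le hc le_rfl))
    have h2 : G.egirth ≠ ⊤ := by rwa [Ne, SimpleGraph.egirth_eq_top]
    have h3 : (G.girth : ℕ∞) = G.egirth := ENat.coe_toNat h2
    have h4 : ((4 * k : ℕ) : ℕ∞) ≤ (c.length : ℕ∞) := by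
      calc ((4 * k : ℕ) : ℕ∞) ≤ (G.girth : ℕ∞) := by exact_mod_cast hgirthN
        _ = G.egirth := h3
        _ ≤ (c.length : ℕ∞) := h1
    exact_mod_cast h4
  obtain ⟨S, hSne, hSgood⟩ := Stmt9.exists_good G hcon
  obtain ⟨v, hvS⟩ := hSne
  set H : SimpleGraph V := Stmt9.within G S with hHdef
  have hle : H ≤ G := Stmt9.within_le G S
  have hcycH : ∀ (x : V) (c : H.Walk x x), c.IsCycle → 4 * k ≤ c.length := by
    intro x c hc
    have h1 := hcycG x (c.mapLe hle) (hc.mapLe hle)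
    rwa [show (c.mapLe hle).length = c.length by simp [Walk.mapLe]] at h1
  have hreachS : ∀ u, H.Reachable v u → u ∈ S := by
    intro u hr
    obtain ⟨w⟩ := hr
    exact Stmt9.within_walk_mem G S w hvS
  have hdeg : ∀ u, H.Reachable v u → 3 ≤ H.degree u := by
    intro u hr
    have huS := hreachS u hr
    have hnb : H.neighborFinset u = G.neighborFinset u ∩ S := by
      ext z
      simp only [SimpleGraph.mem_neighborFinset, Finset.mem_inter]
      constructor
      · rintro ⟨h1, _, h3⟩; exact ⟨h1, h3⟩
      · rintro ⟨h1, h3⟩; exact ⟨h1, huS, h3⟩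
    rw [← SimpleGraph.card_neighborFinset_eq_degree, hnb]
    exact hSgood u huS
  have hgrow := Stmt9.growth H v k hk3 hcycH hdeg
  have hpow : 2 ^ k ≤ 2 ^ (2 * k - 3) := Nat.pow_le_pow_right (by norm_num) (by omega)
  omega
end

section
/- Let G = (V,E) be a finite directed graph with vertex weights w ≥ 0, and let (L,S,R) be a global minimum vertex-cut of G. Then for every x ∈ L: w(S ∖ N⁺_G(x)) ≤ w(L). -/
open Classical Finset

variable {V : Type*}

/-- If `(L,S,R)` is a global minimum vertex-cut of a finite directed graph with nonnegative
vertex weights, then for every `x ∈ L`: `w(S \ N⁺(x)) ≤ w(L)`. -/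
theorem stmt_10 [Fintype V] [DecidableEq V] (E : V → V → Prop) (w : V → ℝ)
    (hw : ∀ v, 0 ≤ w v) (L S R : Finset V) (hcut : IsVertexCut E L S R)
    (hmin : ∀ L' S' R' : Finset V, IsVertexCut E L' S' R' →
      ∑ v ∈ S, w v ≤ ∑ v ∈ S', w v)
    (x : V) (hx : x ∈ L) :
    ∑ v ∈ S \ outNbr E {x}, w v ≤ ∑ v ∈ L, w v := by
  obtain ⟨hL, hR, hLS, hLR, hSR, huniv, hedge⟩ := hcut
  set N := outNbr E {x} with hN
  -- the new cut
  set L' : Finset V := {x} with hL'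
  set S' : Finset V := (L.erase x) ∪ (S ∩ N) with hS'
  set R' : Finset V := R ∪ (S \ N) with hR'
  have hxS : x ∉ S := fun h => (Finset.disjoint_left.mp hLS hx) h
  have hxR : x ∉ R := fun h => (Finset.disjoint_left.mp hLR hx) h
  have hcut' : IsVertexCut E L' S' R' := by
    refine ⟨by simp [hL'], ?_, ?_, ?_, ?_, ?_, ?_⟩
    · intro h
      apply hR
      rw [Finset.eq_empty_iff_forall_notMem] at h ⊢
      intro v hv; exact h v (Finset.mem_union_left _ hv)
    · rw [Finset.disjoint_left]
      intro v hv hv'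
      rw [hL', Finset.mem_singleton] at hv
      subst hv
      rcases Finset.mem_union.mp hv' with h | h
      · exact (Finset.mem_erase.mp h).1 rfl
      · exact hxS (Finset.mem_inter.mp h).1
    · rw [Finset.disjoint_left]
      intro v hv hv'
      rw [hL', Finset.mem_singleton] at hv
      subst hv
      rcases Finset.mem_union.mp hv' with h | h
      · exact hxR h
      · exact hxS (Finset.mem_sdiff.mp h).1
    · rw [Finset.disjoint_left]
      intro v hv hv'
      rcases Finset.mem_union.mp hv with h | h
      · have hvL : v ∈ L := Finset.mem_of_mem_erase h
        rcases Finset.mem_union.mp hv' with h' | h'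
        · exact Finset.disjoint_left.mp hLR hvL h'
        · exact Finset.disjoint_left.mp hLS hvL (Finset.mem_sdiff.mp h').1
      · have := Finset.mem_inter.mp h
        rcases Finset.mem_union.mp hv' with h' | h'
        · exact Finset.disjoint_left.mp hSR this.1 h'
        · exact (Finset.mem_sdiff.mp h').2 this.2
    · have h1 : L' ∪ L.erase x = L := by
        rw [hL']
        ext v; simp only [Finset.mem_union, Finset.mem_singleton, Finset.mem_erase]
        constructor
        · rintro (rfl | ⟨_, h⟩) <;> [exact hx; exact h]
        · intro h; by_cases hvx : v = x
          · exact Or.inl hvx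
          · exact Or.inr ⟨hvx, h⟩
      have h2 : (S ∩ N) ∪ (S \ N) = S := by
        ext v; simp only [Finset.mem_union, Finset.mem_inter, Finset.mem_sdiff]
        constructor
        · rintro (⟨h, _⟩ | ⟨h, _⟩) <;> exact h
        · intro h; by_cases hvN : v ∈ N
          · exact Or.inl ⟨h, hvN⟩
          · exact Or.inr ⟨h, hvN⟩
      calc L' ∪ S' ∪ R' = (L' ∪ L.erase x) ∪ ((S ∩ N) ∪ (S \ N)) ∪ R := by
            rw [hS', hR']; ac_rfl
        _ = Finset.univ := by rw [h1, h2, huniv]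
    · intro u hu v hv
      rw [hL', Finset.mem_singleton] at hu
      rw [hu]
      rcases Finset.mem_union.mp hv with h | h
      · exact hedge x hx v h
      · obtain ⟨hvS, hvN⟩ := Finset.mem_sdiff.mp h
        intro hE
        apply hvN
        have hvx : v ≠ x := fun h => hxS (h ▸ hvS)
        simp only [hN, hL', outNbr, Finset.mem_filter, Finset.mem_singleton]
        exact ⟨Finset.mem_univ v, hvx, x, rfl, hE⟩
  have hle := hmin L' S' R' hcut'
  have hdisj : Disjoint (L.erase x) (S ∩ N) := by
    rw [Finset.disjoint_left]
    intro v hv hv'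
    exact Finset.disjoint_left.mp hLS (Finset.mem_of_mem_erase hv) (Finset.mem_inter.mp hv').1
  have hS'sum : ∑ v ∈ S', w v = ∑ v ∈ L.erase x, w v + ∑ v ∈ S ∩ N, w v := by
    rw [hS', Finset.sum_union hdisj]
  have hSsplit : ∑ v ∈ S, w v = ∑ v ∈ S ∩ N, w v + ∑ v ∈ S \ N, w v := by
    exact (Finset.sum_inter_add_sum_sdiff S N w).symm
  have herase : ∑ v ∈ L.erase x, w v ≤ ∑ v ∈ L, w v :=
    Finset.sum_le_sum_of_subset_of_nonneg (Finset.erase_subset x L) (fun i _ _ => hw i)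
  linarith [hle, hS'sum, hSsplit, herase]
end

section
/- Let G = (V,E) be a finite directed graph, let x ≠ y be vertices, and let (L',S',R') be an x-y vertex-cut of G. Let P be a simple directed path in G from x to y that contains an edge (u,v) with u ∈ S' ∪ R' and v ∈ L' ∪ S'. Then P contains at least two vertices of S'. -/
open Finset

variable {V : Type*}

lemma aux_cross [Fintype V] [DecidableEq V] (E : V → V → Prop)
    (L' S' R' : Finset V) (hLR : Disjoint L' R')
    (hpart : L' ∪ S' ∪ R' = Finset.univ)
    (hnoedge : ∀ u ∈ L', ∀ v ∈ R', ¬ E u v) :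
    ∀ (q : List V) (hq : q ≠ []), q.Chain' E →
      q.head hq ∈ L' ∪ S' → q.getLast hq ∈ S' ∪ R' → ∃ s ∈ S', s ∈ q
  | [] => fun hq => absurd rfl hq
  | [a] => by
      intro _ _ hh hl
      simp only [List.head_cons, List.getLast_singleton] at hh hl
      rcases Finset.mem_union.mp hl with l | l
      · exact ⟨a, l, by simp⟩
      · rcases Finset.mem_union.mp hh with h | h
        · exact absurd l (Finset.disjoint_left.mp hLR h)
        · exact ⟨a, h, by simp⟩
  | a :: b :: t => by
      intro _ hch hh hl
      rcases Finset.mem_union.mp hh with h | h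
      · have hE : E a b := (List.isChain_cons_cons.mp hch).1
        have hbR : b ∉ R' := fun hb => hnoedge a h b hb hE
        have hb : b ∈ L' ∪ S' := by
          have : b ∈ L' ∪ S' ∪ R' := hpart ▸ Finset.mem_univ b
          rcases Finset.mem_union.mp this with hb' | hb'
          · exact hb'
          · exact absurd hb' hbR
        have hl' : (b :: t).getLast (by simp) ∈ S' ∪ R' := by
          rwa [List.getLast_cons (by simp)] at hl
        obtain ⟨s, hs, hsm⟩ := aux_cross E L' S' R' hLR hpart hnoedge (b :: t)
          (by simp) (List.isChain_cons_cons.mp hch).2 (by simpa using hb) hl'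
        exact ⟨s, hs, List.mem_cons_of_mem _ hsm⟩
      · exact ⟨a, h, by simp⟩

/-- Let `(L',S',R')` be an `x`-`y` vertex-cut of a finite directed graph `G` (a partition of
`V` into three disjoint sets with `x ∈ L'`, `y ∈ R'` and no edge from `L'` to `R'`), and let
`P` be a simple directed path from `x` to `y` (a duplicate-free list of vertices, consecutive
ones joined by edges) containing an edge `(u,v)` with `u ∈ S' ∪ R'` and `v ∈ L' ∪ S'`.
Then `P` contains at least two vertices of `S'`. -/
theorem stmt_12 [Fintype V] [DecidableEq V] (E : V → V → Prop) (x y : V) (hxy : x ≠ y)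
    (L' S' R' : Finset V)
    (hLS : Disjoint L' S') (hLR : Disjoint L' R') (hSR : Disjoint S' R')
    (hpart : L' ∪ S' ∪ R' = Finset.univ) (hx : x ∈ L') (hy : y ∈ R')
    (hnoedge : ∀ u ∈ L', ∀ v ∈ R', ¬ E u v)
    (p : List V) (hnd : p.Nodup) (hchain : p.Chain' E)
    (hhead : p.head? = some x) (hlast : p.getLast? = some y)
    (u v : V) (hinfix : [u, v] <:+: p) (hu : u ∈ S' ∪ R') (hv : v ∈ L' ∪ S') :
    2 ≤ (p.toFinset ∩ S').card := by
  obtain ⟨a, b, hp⟩ := hinfix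
  set q1 : List V := a ++ [u] with hq1
  set q2 : List V := v :: b with hq2
  have hpq : p = q1 ++ q2 := by
    rw [← hp, hq1, hq2]; simp
  have hq1ne : q1 ≠ [] := by simp [hq1]
  have hq2ne : q2 ≠ [] := by simp [hq2]
  -- heads and lasts
  have hh1 : q1.head hq1ne = x := by
    have : p.head? = q1.head? := by
      rw [hpq, List.head?_append]
      cases hq : q1.head? with
      | none => exact absurd (List.head?_eq_none_iff.mp hq) hq1ne
      | some w => rfl
    rw [hhead] at this
    have := this.symm
    rw [List.head?_eq_head hq1ne] at this
    exact (Option.some_inj.mp this)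
  have hl1 : q1.getLast hq1ne = u := by
    simp [hq1]
  have hh2 : q2.head hq2ne = v := rfl
  have hl2 : q2.getLast hq2ne = y := by
    have : p.getLast? = q2.getLast? := by
      rw [hpq, List.getLast?_append]
      cases hq : q2.getLast? with
      | none => exact absurd (List.getLast?_eq_none_iff.mp hq) hq2ne
      | some w => rfl
    rw [hlast] at this
    have := this.symm
    rw [List.getLast?_eq_getLast hq2ne] at this
    exact (Option.some_inj.mp this)
  have hchain' := hpq ▸ hchain
  unfold List.Chain' at hchain'
  rw [List.isChain_append] at hchain'
  obtain ⟨hc1, hc2, _⟩ := hchain'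
  obtain ⟨s1, hs1S, hs1m⟩ := aux_cross E L' S' R' hLR hpart hnoedge q1 hq1ne hc1
    (by rw [hh1]; exact Finset.mem_union_left _ hx) (by rw [hl1]; exact hu)
  obtain ⟨s2, hs2S, hs2m⟩ := aux_cross E L' S' R' hLR hpart hnoedge q2 hq2ne hc2
    (by rw [hh2]; exact hv) (by rw [hl2]; exact Finset.mem_union_right _ hy)
  have hdisj : List.Disjoint q1 q2 :=
    List.disjoint_of_nodup_append (hpq ▸ hnd)
  have hne : s1 ≠ s2 := fun h => hdisj hs1m (h ▸ hs2m)
  have hm1 : s1 ∈ p.toFinset ∩ S' := by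
    rw [Finset.mem_inter, List.mem_toFinset, hpq]
    exact ⟨List.mem_append_left _ hs1m, hs1S⟩
  have hm2 : s2 ∈ p.toFinset ∩ S' := by
    rw [Finset.mem_inter, List.mem_toFinset, hpq]
    exact ⟨List.mem_append_right _ hs2m, hs2S⟩
  exact Finset.one_lt_card.mpr ⟨s1, hm1, s2, hm2, hne⟩
end

section
/- Let G = (V,E) be a finite directed graph on n ≥ 2 vertices with vertex weights w ≥ 0, let x ≠ y be vertices with (x,y) ∉ E, let OPT be the minimum value of an x-y vertex-cut of G, and let (L',S',R') be an x-y vertex-cut of G. Let G₁ be the graph obtained from G by deleting every edge (u,v) ∈ E with u ∈ S' ∪ R' and v ∈ L' ∪ S'. Then every x-y vertex-cut of G₁ has value at least 2·OPT − w(S'). -/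
open Classical Finset

variable {V : Type*}

/-- Let `OPT` be the minimum `x`-`y` vertex-cut value of `G`, let `(L',S',R')` be an `x`-`y`
vertex-cut of `G`, and let `G₁` be obtained from `G` by deleting every edge `(u,v)` with
`u ∈ S' ∪ R'` and `v ∈ L' ∪ S'`. Then every `x`-`y` vertex-cut of `G₁` has value at least
`2·OPT − w(S')`. -/
theorem stmt_13 [Fintype V] [DecidableEq V] (E : V → V → Prop) (w : V → ℝ)
    (hw : ∀ v, 0 ≤ w v) (hn : 2 ≤ Fintype.card V) (x y : V) (hxy : x ≠ y)
    (hE : ¬ E x y) (OPT : ℝ)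
    (hOPT_ex : ∃ L S R : Finset V, IsSTVertexCut E L S R x y ∧ ∑ v ∈ S, w v = OPT)
    (hOPT_min : ∀ L S R : Finset V, IsSTVertexCut E L S R x y → OPT ≤ ∑ v ∈ S, w v)
    (L' S' R' : Finset V) (hcut' : IsSTVertexCut E L' S' R' x y) :
    ∀ L₁ S₁ R₁ : Finset V,
      IsSTVertexCut (fun a b => E a b ∧ ¬(a ∈ S' ∪ R' ∧ b ∈ L' ∪ S')) L₁ S₁ R₁ x y →
      2 * OPT - ∑ v ∈ S', w v ≤ ∑ v ∈ S₁, w v := by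
  classical
  intro L₁ S₁ R₁ h₁
  obtain ⟨⟨hL'ne, hR'ne, hLS', hLR', hSR', hU', hE'⟩, hxL', hyR'⟩ := hcut'
  obtain ⟨⟨hL₁ne, hR₁ne, hLS₁, hLR₁, hSR₁, hU₁, hE₁⟩, hxL₁, hyR₁⟩ := h₁
  have htri' : ∀ v : V, v ∈ L' ∨ v ∈ S' ∨ v ∈ R' := fun v => by
    have := Finset.mem_univ v
    rw [← hU'] at this
    simpa [Finset.mem_union, or_assoc] using this
  have htri₁ : ∀ v : V, v ∈ L₁ ∨ v ∈ S₁ ∨ v ∈ R₁ := fun v => by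
    have := Finset.mem_univ v
    rw [← hU₁] at this
    simpa [Finset.mem_union, or_assoc] using this
  -- basic non-memberships
  have hyL' : y ∉ L' := fun h => (Finset.disjoint_left.mp hLR') h hyR'
  have hyS' : y ∉ S' := fun h => (Finset.disjoint_left.mp hSR') h hyR'
  have hyL₁ : y ∉ L₁ := fun h => (Finset.disjoint_left.mp hLR₁) h hyR₁
  have hyS₁ : y ∉ S₁ := fun h => (Finset.disjoint_left.mp hSR₁) h hyR₁
  have hxS' : x ∉ S' := fun h => (Finset.disjoint_left.mp hLS') hxL' h
  have hxR' : x ∉ R' := fun h => (Finset.disjoint_left.mp hLR') hxL' h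
  have hxS₁ : x ∉ S₁ := fun h => (Finset.disjoint_left.mp hLS₁) hxL₁ h
  have hxR₁ : x ∉ R₁ := fun h => (Finset.disjoint_left.mp hLR₁) hxL₁ h
  -- Cut A
  set LA : Finset V := L' ∩ L₁ with hLA
  set SA : Finset V := S' ∩ (L₁ ∪ S₁) ∪ L' ∩ S₁ with hSA
  set RA : Finset V := Finset.univ \ (LA ∪ SA) with hRA
  have hcutA : IsSTVertexCut E LA SA RA x y := by
    have hxLA : x ∈ LA := Finset.mem_inter.mpr ⟨hxL', hxL₁⟩
    have hyRA : y ∈ RA := by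
      simp only [hRA, Finset.mem_sdiff, Finset.mem_univ, true_and, Finset.mem_union,
        Finset.mem_inter, hLA, hSA]
      push_neg
      tauto
    refine ⟨⟨Finset.ne_empty_of_mem hxLA, Finset.ne_empty_of_mem hyRA, ?_, ?_, ?_, ?_, ?_⟩,
        hxLA, hyRA⟩
    · rw [Finset.disjoint_left]
      intro u hu hu'
      simp only [hLA, Finset.mem_inter] at hu
      simp only [hSA, Finset.mem_union, Finset.mem_inter] at hu'
      rcases hu' with ⟨h1, _⟩ | ⟨_, h2⟩
      · exact (Finset.disjoint_left.mp hLS') hu.1 h1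
      · exact (Finset.disjoint_left.mp hLS₁) hu.2 h2
    · rw [Finset.disjoint_left]
      intro u hu hu'
      rw [hRA, Finset.mem_sdiff] at hu'
      exact hu'.2 (Finset.mem_union_left _ hu)
    · rw [Finset.disjoint_left]
      intro u hu hu'
      rw [hRA, Finset.mem_sdiff] at hu'
      exact hu'.2 (Finset.mem_union_right _ hu)
    · rw [hRA, Finset.union_sdiff_of_subset (Finset.subset_univ _)]
    · intro u hu v hv huv
      simp only [hLA, Finset.mem_inter] at hu
      obtain ⟨huL', huL₁⟩ := hu
      rw [hRA, Finset.mem_sdiff] at hv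
      apply hv.2
      have hvR' : v ∉ R' := fun h => hE' u huL' v h huv
      have huS' : u ∉ S' := fun h => (Finset.disjoint_left.mp hLS') huL' h
      have huR' : u ∉ R' := fun h => (Finset.disjoint_left.mp hLR') huL' h
      have hvR₁ : v ∉ R₁ := by
        intro h
        exact hE₁ u huL₁ v h ⟨huv, fun hc => by
          rcases Finset.mem_union.mp hc.1 with h' | h'
          · exact huS' h'
          · exact huR' h'⟩
      simp only [Finset.mem_union, Finset.mem_inter, hLA, hSA]
      rcases htri' v with hv' | hv' | hv'
      · rcases htri₁ v with hv₁ | hv₁ | hv₁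
        · exact Or.inl ⟨hv', hv₁⟩
        · exact Or.inr (Or.inr ⟨hv', hv₁⟩)
        · exact absurd hv₁ hvR₁
      · rcases htri₁ v with hv₁ | hv₁ | hv₁
        · exact Or.inr (Or.inl ⟨hv', Or.inl hv₁⟩)
        · exact Or.inr (Or.inl ⟨hv', Or.inr hv₁⟩)
        · exact absurd hv₁ hvR₁
      · exact absurd hv' hvR'
  -- Cut B
  set SB : Finset V := S' ∩ R₁ ∪ S₁ ∩ (S' ∪ R') with hSB
  set RB : Finset V := R' ∩ R₁ with hRB
  set LB : Finset V := Finset.univ \ (SB ∪ RB) with hLB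
  have hcutB : IsSTVertexCut E LB SB RB x y := by
    have hyRB : y ∈ RB := Finset.mem_inter.mpr ⟨hyR', hyR₁⟩
    have hxLB : x ∈ LB := by
      simp only [hLB, Finset.mem_sdiff, Finset.mem_univ, true_and, Finset.mem_union,
        Finset.mem_inter, hSB, hRB]
      push_neg
      tauto
    refine ⟨⟨Finset.ne_empty_of_mem hxLB, Finset.ne_empty_of_mem hyRB, ?_, ?_, ?_, ?_, ?_⟩,
        hxLB, hyRB⟩
    · rw [Finset.disjoint_left]
      intro u hu hu'
      rw [hLB, Finset.mem_sdiff] at hu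
      exact hu.2 (Finset.mem_union_left _ hu')
    · rw [Finset.disjoint_left]
      intro u hu hu'
      rw [hLB, Finset.mem_sdiff] at hu
      exact hu.2 (Finset.mem_union_right _ hu')
    · rw [Finset.disjoint_left]
      intro u hu hu'
      simp only [hSB, Finset.mem_union, Finset.mem_inter] at hu
      simp only [hRB, Finset.mem_inter] at hu'
      rcases hu with ⟨h1, _⟩ | ⟨h2, _⟩
      · exact (Finset.disjoint_left.mp hSR') h1 hu'.1
      · exact (Finset.disjoint_left.mp hSR₁) h2 hu'.2
    · rw [hLB, Finset.union_assoc, Finset.sdiff_union_of_subset (Finset.subset_univ _)]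
    · intro u hu v hv huv
      rw [hLB, Finset.mem_sdiff] at hu
      simp only [hRB, Finset.mem_inter] at hv
      obtain ⟨hvR', hvR₁⟩ := hv
      apply hu.2
      have hvL' : v ∉ L' := fun h => (Finset.disjoint_left.mp hLR') h hvR'
      have hvS' : v ∉ S' := fun h => (Finset.disjoint_left.mp hSR') h hvR'
      have huL' : u ∉ L' := fun h => hE' u h v hvR' huv
      have huSR' : u ∈ S' ∪ R' := by
        rcases htri' u with h | h | h
        · exact absurd h huL'
        · exact Finset.mem_union_left _ h
        · exact Finset.mem_union_right _ h
      have hG₁ : E u v ∧ ¬(u ∈ S' ∪ R' ∧ v ∈ L' ∪ S') := by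
        refine ⟨huv, fun hc => ?_⟩
        rcases Finset.mem_union.mp hc.2 with h | h
        · exact hvL' h
        · exact hvS' h
      have huL₁ : u ∉ L₁ := fun h => hE₁ u h v hvR₁ hG₁
      simp only [Finset.mem_union, Finset.mem_inter, hSB, hRB]
      rcases htri₁ u with h₁ | h₁ | h₁
      · exact absurd h₁ huL₁
      · exact Or.inl (Or.inr ⟨h₁, Finset.mem_union.mp huSR'⟩)
      · rcases Finset.mem_union.mp huSR' with h | h
        · exact Or.inl (Or.inl ⟨h, h₁⟩)
        · exact Or.inr ⟨h, h₁⟩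
  have hA : OPT ≤ ∑ v ∈ SA, w v := hOPT_min _ _ _ hcutA
  have hB : OPT ≤ ∑ v ∈ SB, w v := hOPT_min _ _ _ hcutB
  -- sum computations
  have hdA : Disjoint (S' ∩ (L₁ ∪ S₁)) (L' ∩ S₁) :=
    Finset.disjoint_left.mpr fun u hu hu' =>
      (Finset.disjoint_left.mp hLS') (Finset.mem_inter.mp hu').1 (Finset.mem_inter.mp hu).1
  have hdB : Disjoint (S' ∩ R₁) (S₁ ∩ (S' ∪ R')) :=
    Finset.disjoint_left.mpr fun u hu hu' =>
      (Finset.disjoint_left.mp hSR₁) (Finset.mem_inter.mp hu').1 (Finset.mem_inter.mp hu).2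
  have hsumA : ∑ v ∈ SA, w v = ∑ v ∈ S' ∩ (L₁ ∪ S₁), w v + ∑ v ∈ L' ∩ S₁, w v := by
    rw [hSA, Finset.sum_union hdA]
  have hsumB : ∑ v ∈ SB, w v = ∑ v ∈ S' ∩ R₁, w v + ∑ v ∈ S₁ ∩ (S' ∪ R'), w v := by
    rw [hSB, Finset.sum_union hdB]
  have hS'split : ∑ v ∈ S' ∩ (L₁ ∪ S₁), w v + ∑ v ∈ S' ∩ R₁, w v = ∑ v ∈ S', w v := by
    rw [← Finset.sum_union (Finset.disjoint_left.mpr fun u hu hu' => by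
      rcases Finset.mem_union.mp (Finset.mem_inter.mp hu).2 with h | h
      · exact (Finset.disjoint_left.mp hLR₁) h (Finset.mem_inter.mp hu').2
      · exact (Finset.disjoint_left.mp hSR₁) h (Finset.mem_inter.mp hu').2)]
    congr 1
    rw [← Finset.inter_union_distrib_left, hU₁, Finset.inter_univ]
  have hS₁bound : ∑ v ∈ L' ∩ S₁, w v + ∑ v ∈ S₁ ∩ (S' ∪ R'), w v ≤ ∑ v ∈ S₁, w v := by
    rw [← Finset.sum_union (Finset.disjoint_left.mpr fun u hu hu' => by
      rcases Finset.mem_union.mp (Finset.mem_inter.mp hu').2 with h | h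
      · exact (Finset.disjoint_left.mp hLS') (Finset.mem_inter.mp hu).1 h
      · exact (Finset.disjoint_left.mp hLR') (Finset.mem_inter.mp hu).1 h)]
    apply Finset.sum_le_sum_of_subset_of_nonneg
    · intro u hu
      rcases Finset.mem_union.mp hu with h | h
      · exact (Finset.mem_inter.mp h).2
      · exact (Finset.mem_inter.mp h).1
    · intro u _ _; exact hw u
  linarith
end

section
/- Let G = (V,E) be a directed graph on n ≥ 2 vertices with integer vertex weights w satisfying w(v) ≥ 1 for all v, let x ≠ y be vertices with (x,y) ∉ E, let M' > 0, and let ŵ be the reduced weights. If (L,S,R) is a minimum x-y vertex-cut of G with respect to the weights w, then ŵ(S) ≤ OPT_ŵ + 2n, where OPT_ŵ denotes the minimum value of an x-y vertex-cut of G with respect to the weights ŵ. -/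
open Classical Finset

variable {V : Type*}

/-- The reduced weights: `ŵ(v) = 0` if `w(v) < 2M'`, and `ŵ(v) = ⌊(w(v) − M')/M'⌋`
otherwise. -/
noncomputable def redW (w : V → ℤ) (M' : ℝ) (v : V) : ℤ :=
  if (w v : ℝ) < 2 * M' then 0 else ⌊((w v : ℝ) - M') / M'⌋

/-- If `(L,S,R)` is a minimum `x`-`y` vertex-cut of `G` with respect to the weights `w`, then
`ŵ(S) ≤ OPT_ŵ + 2n`, where `OPT_ŵ` is the minimum `x`-`y` vertex-cut value with respect to the
reduced weights `ŵ`. -/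
theorem stmt_15 [Fintype V] [DecidableEq V] (E : V → V → Prop) (w : V → ℤ)
    (hw : ∀ v, 1 ≤ w v) (hn : 2 ≤ Fintype.card V) (x y : V) (hxy : x ≠ y)
    (hE : ¬ E x y) (M' : ℝ) (hM' : 0 < M')
    (L S R : Finset V) (hcut : IsSTVertexCut E L S R x y)
    (hmin : ∀ L' S' R' : Finset V, IsSTVertexCut E L' S' R' x y →
      ∑ v ∈ S, w v ≤ ∑ v ∈ S', w v)
    (OPThat : ℤ)
    (hOPThat_ex : ∃ L' S' R' : Finset V, IsSTVertexCut E L' S' R' x y ∧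
      ∑ v ∈ S', redW w M' v = OPThat)
    (hOPThat_min : ∀ L' S' R' : Finset V, IsSTVertexCut E L' S' R' x y →
      OPThat ≤ ∑ v ∈ S', redW w M' v) :
    ∑ v ∈ S, redW w M' v ≤ OPThat + 2 * (Fintype.card V : ℤ) := by
  obtain ⟨L', S', R', hcut', hS'⟩ := hOPThat_ex
  -- pointwise bounds
  have h1 : ∀ v, M' * (redW w M' v : ℝ) ≤ (w v : ℝ) := by
    intro v
    unfold redW
    split
    · have := hw v
      have : (1 : ℝ) ≤ (w v : ℝ) := by exact_mod_cast this
      simp; linarith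
    · rename_i h
      have hfl : (⌊((w v : ℝ) - M') / M'⌋ : ℝ) ≤ ((w v : ℝ) - M') / M' :=
        Int.floor_le _
      have := mul_le_mul_of_nonneg_left hfl (le_of_lt hM')
      rw [mul_div_cancel₀ _ (ne_of_gt hM')] at this
      linarith
  have h2 : ∀ v, (w v : ℝ) ≤ M' * ((redW w M' v : ℝ) + 2) := by
    intro v
    unfold redW
    split
    · rename_i h
      push_cast
      nlinarith
    · rename_i h
      have hfl : ((w v : ℝ) - M') / M' - 1 < (⌊((w v : ℝ) - M') / M'⌋ : ℝ) := by
        have := Int.sub_one_lt_floor (((w v : ℝ) - M') / M')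
        linarith
      have := mul_lt_mul_of_pos_left hfl hM'
      rw [mul_sub, mul_div_cancel₀ _ (ne_of_gt hM')] at this
      push_cast
      nlinarith
  -- sum bounds
  have hA : M' * ((∑ v ∈ S, redW w M' v : ℤ) : ℝ) ≤ ((∑ v ∈ S, w v : ℤ) : ℝ) := by
    push_cast
    rw [Finset.mul_sum]
    exact Finset.sum_le_sum fun v _ => h1 v
  have hB : ((∑ v ∈ S', w v : ℤ) : ℝ) ≤
      M' * (((∑ v ∈ S', redW w M' v : ℤ) : ℝ) + 2 * (S'.card : ℝ)) := by
    push_cast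
    rw [mul_add, Finset.mul_sum]
    have : ∑ v ∈ S', (w v : ℝ) ≤ ∑ v ∈ S', M' * ((redW w M' v : ℝ) + 2) :=
      Finset.sum_le_sum fun v _ => h2 v
    calc ∑ v ∈ S', (w v : ℝ) ≤ ∑ v ∈ S', M' * ((redW w M' v : ℝ) + 2) := this
      _ = ∑ v ∈ S', M' * (redW w M' v : ℝ) + M' * (2 * (S'.card : ℝ)) := by
          rw [Finset.sum_congr rfl fun v _ => mul_add M' _ 2, Finset.sum_add_distrib]
          simp [Finset.sum_const, mul_comm, mul_assoc, mul_left_comm]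
      _ = _ := by ring_nf
  have hcard : (S'.card : ℝ) ≤ (Fintype.card V : ℝ) := by
    exact_mod_cast Finset.card_le_card (Finset.subset_univ S')
  have hmw : ((∑ v ∈ S, w v : ℤ) : ℝ) ≤ ((∑ v ∈ S', w v : ℤ) : ℝ) := by
    exact_mod_cast hmin L' S' R' hcut'
  have hfin : M' * ((∑ v ∈ S, redW w M' v : ℤ) : ℝ) ≤
      M' * ((OPThat : ℝ) + 2 * (Fintype.card V : ℝ)) := by
    have : ((∑ v ∈ S', redW w M' v : ℤ) : ℝ) = (OPThat : ℝ) := by exact_mod_cast hS'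
    rw [this] at hB
    nlinarith
  have := le_of_mul_le_mul_left hfin hM'
  exact_mod_cast this
end

section
/- Let G = (V,E) be a directed graph on n vertices with integer vertex weights w satisfying w(v) ≥ 1 for all v, let x ≠ y be vertices, let λ, γ ≥ 1 be integers, let M' > 0, and let ŵ be the reduced weights. Let (L,S,R) and (L',S',R') be x-y vertex-cuts of G. If (L',S',R') is (λ,γ)-well-behaving for scale 2M' with respect to (L,S,R) under the weights w, then (L',S',R') is (λ,γ)-well-behaving for scale 4 with respect to (L,S,R) under the weights ŵ. -/
open Classical Finset

variable {V : Type*}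

/-- The out-volume `Vol⁺_G(X) = ∑_{v ∈ X} |N⁺_G(v)|` of a vertex set `X`. -/
noncomputable def volOut [Fintype V] (E : V → V → Prop) (X : Finset V) : ℕ :=
  ∑ v ∈ X, (outNbr E {v}).card

/-- The cut with left side `L'` and separator `S'` is `(lam,gam)`-well-behaving for scale `M'`
with respect to the cut with left side `L` and separator `S`, under the weights `w`:
(W1) `Vol⁺(L') ≤ 100 n² / gam`; (W2) `w(S') ≤ w(S) + 10 n M'`; and
(W3) `(L ∪ S) \ (L' ∪ S')` contains at most `20·lam·gam` vertices of weight at least `M'`. -/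
def WellBehaving [Fintype V] [DecidableEq V] (E : V → V → Prop) (w : V → ℤ)
    (lam gam : ℕ) (M' : ℝ) (L S L' S' : Finset V) : Prop :=
  (volOut E L' : ℝ) ≤ 100 * (Fintype.card V : ℝ) ^ 2 / (gam : ℝ) ∧
  (∑ v ∈ S', (w v : ℝ)) ≤ (∑ v ∈ S, (w v : ℝ)) + 10 * (Fintype.card V : ℝ) * M' ∧
  (((L ∪ S) \ (L' ∪ S')).filter fun v => M' ≤ (w v : ℝ)).card ≤ 20 * lam * gam

/-- If the `x`-`y` vertex-cut `(L',S',R')` is `(lam,gam)`-well-behaving for scale `2M'` with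
respect to the `x`-`y` vertex-cut `(L,S,R)` under the weights `w`, then it is
`(lam,gam)`-well-behaving for scale `4` with respect to `(L,S,R)` under the reduced
weights `ŵ`. -/
theorem stmt_16 [Fintype V] [DecidableEq V] (E : V → V → Prop) (w : V → ℤ)
    (hw : ∀ v, 1 ≤ w v) (x y : V) (hxy : x ≠ y)
    (lam gam : ℕ) (hlam : 1 ≤ lam) (hgam : 1 ≤ gam) (M' : ℝ) (hM' : 0 < M')
    (L S R L' S' R' : Finset V)
    (hcut : IsSTVertexCut E L S R x y) (hcut' : IsSTVertexCut E L' S' R' x y)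
    (hwb : WellBehaving E w lam gam (2 * M') L S L' S') :
    WellBehaving E (redW w M') lam gam 4 L S L' S' := by
  obtain ⟨h1, h2, h3⟩ := hwb
  have hM0 : (M' : ℝ) ≠ 0 := ne_of_gt hM'
  have hA : ∀ v, (redW w M' v : ℝ) ≤ (w v : ℝ) / M' := by
    intro v
    unfold redW
    split_ifs with h
    · simp only [Int.cast_zero]
      have : (0:ℝ) ≤ (w v : ℝ) := by
        have := hw v; exact_mod_cast le_trans zero_le_one this
      positivity
    · push_cast
      calc (⌊((w v : ℝ) - M') / M'⌋ : ℝ) ≤ ((w v : ℝ) - M') / M' := Int.floor_le _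
        _ ≤ (w v : ℝ) / M' := by
            gcongr
            linarith
  have hA' : ∀ v, (redW w M' v : ℝ) ≤ (w v : ℝ) / M' := hA
  have hB : ∀ v, (w v : ℝ) / M' - 2 ≤ (redW w M' v : ℝ) := by
    intro v
    unfold redW
    split_ifs with h
    · simp only [Int.cast_zero]
      have : (w v : ℝ) / M' < 2 := by
        rw [div_lt_iff₀ hM']; linarith
      linarith
    · have hfl : ((w v : ℝ) - M') / M' - 1 ≤ (⌊((w v : ℝ) - M') / M'⌋ : ℝ) := by
        have := Int.sub_one_lt_floor (((w v : ℝ) - M') / M'); linarith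
      have : ((w v : ℝ) - M') / M' = (w v : ℝ) / M' - 1 := by
        field_simp
      linarith
  refine ⟨h1, ?_, ?_⟩
  · -- W2
    have n0 : (0:ℝ) ≤ (Fintype.card V : ℝ) := by positivity
    have hS'le : (∑ v ∈ S', (redW w M' v : ℝ)) ≤ (∑ v ∈ S', (w v : ℝ)) / M' := by
      rw [Finset.sum_div]
      exact Finset.sum_le_sum fun v _ => hA v
    have hdiv : (∑ v ∈ S', (w v : ℝ)) / M' ≤ (∑ v ∈ S, (w v : ℝ)) / M'
        + 20 * (Fintype.card V : ℝ) := by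
      have h2' : (∑ v ∈ S', (w v : ℝ)) ≤ (∑ v ∈ S, (w v : ℝ))
          + 20 * (Fintype.card V : ℝ) * M' := by linarith
      rw [div_le_iff₀ hM']
      rw [add_mul, div_mul_cancel₀ _ hM0]
      linarith
    have hSge : (∑ v ∈ S, (w v : ℝ)) / M'
        ≤ (∑ v ∈ S, (redW w M' v : ℝ)) + 2 * S.card := by
      have : (∑ v ∈ S, ((w v : ℝ) / M' - 2)) ≤ ∑ v ∈ S, (redW w M' v : ℝ) :=
        Finset.sum_le_sum fun v _ => hB v
      rw [Finset.sum_sub_distrib, ← Finset.sum_div, Finset.sum_const] at this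
      simp only [nsmul_eq_mul] at this
      linarith
    have hcard : (S.card : ℝ) ≤ (Fintype.card V : ℝ) := by
      exact_mod_cast Finset.card_le_univ S
    calc (∑ v ∈ S', (redW w M' v : ℝ)) ≤ (∑ v ∈ S', (w v : ℝ)) / M' := hS'le
      _ ≤ (∑ v ∈ S, (w v : ℝ)) / M' + 20 * (Fintype.card V : ℝ) := hdiv
      _ ≤ (∑ v ∈ S, (redW w M' v : ℝ)) + 2 * S.card + 20 * (Fintype.card V : ℝ) := by
          linarith
      _ ≤ (∑ v ∈ S, (redW w M' v : ℝ)) + 10 * (Fintype.card V : ℝ) * 4 := by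
          linarith
  · -- W3
    refine le_trans (Finset.card_le_card ?_) h3
    intro v hv
    simp only [Finset.mem_filter] at hv ⊢
    refine ⟨hv.1, ?_⟩
    by_contra hc
    push_neg at hc
    have : redW w M' v = 0 := by unfold redW; rw [if_pos hc]
    rw [this] at hv
    norm_num at hv
end

section
/- Let G = (V,E) be a finite directed graph with vertex weights w : V → ℝ≥0, and let (L,S,R) be a global minimum vertex-cut of G. Let λ ≥ |L| be a real number, let τ > 0, and set τ̂ = τ/(8λ). Then for every z ∈ L and every v ∈ S with w(v) ≥ τ/2, there exists a simple directed path in G from z to v all of whose internal vertices lie in L and have weight at least τ̂. -/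
open Classical Finset

variable {V : Type*}

private lemma head?_eq_of_prefix {α : Type*} {l₁ l₂ : List α} (h : l₁ <+: l₂) (h1 : l₁ ≠ []) :
    l₁.head? = l₂.head? := by
  obtain ⟨t, rfl⟩ := h
  cases l₁ with
  | nil => exact absurd rfl h1
  | cons a l => simp

/-- Let `(L,S,R)` be a global minimum vertex-cut of `G`, let `lam ≥ |L|` be real, let `τ > 0`,
and set `τ̂ = τ/(8·lam)`. Then for every `z ∈ L` and every `v ∈ S` with `w(v) ≥ τ/2` there is
a simple directed path (a duplicate-free list of vertices, consecutive ones joined by edges)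
from `z` to `v` all of whose internal vertices (members other than the endpoints `z` and `v`)
lie in `L` and have weight at least `τ̂`. -/
theorem stmt_19 [Fintype V] [DecidableEq V] (E : V → V → Prop) (w : V → ℝ)
    (hw : ∀ v, 0 ≤ w v) (L S R : Finset V) (hcut : IsVertexCut E L S R)
    (hmin : ∀ L' S' R' : Finset V, IsVertexCut E L' S' R' →
      ∑ u ∈ S, w u ≤ ∑ u ∈ S', w u)
    (lam : ℝ) (hlam : (L.card : ℝ) ≤ lam) (τ : ℝ) (hτ : 0 < τ)
    (z : V) (hz : z ∈ L) (v : V) (hv : v ∈ S) (hwv : τ / 2 ≤ w v) :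
    ∃ p : List V, p.Nodup ∧ p.Chain' E ∧ p.head? = some z ∧ p.getLast? = some v ∧
      ∀ u ∈ p, u ≠ z → u ≠ v → u ∈ L ∧ τ / (8 * lam) ≤ w u := by
  classical
  obtain ⟨hL, hR, hLS, hLR, hSR, huniv, hnoedge⟩ := hcut
  set t : ℝ := τ / (8 * lam) with ht
  have hL1 : 1 ≤ (L.card : ℝ) := by
    have := Finset.card_pos.mpr (Finset.nonempty_of_ne_empty hL)
    exact_mod_cast this
  have hlam0 : 0 < lam := lt_of_lt_of_le one_pos (le_trans hL1 hlam)
  have ht0 : 0 < t := div_pos hτ (by positivity)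
  set P : V → Prop := fun x => ∃ p : List V, p.Nodup ∧ p.Chain' E ∧ p.head? = some z ∧
      p.getLast? = some x ∧ ∀ u ∈ p, u ≠ z → u ≠ x → u ∈ L ∧ t ≤ w u with hPdef
  by_contra hPv
  have hPv : ¬ P v := hPv
  -- z is trivially reachable
  have hPz : P z := by
    refine ⟨[z], by simp, List.isChain_singleton z, rfl, rfl, ?_⟩
    intro u hu huz _
    simp at hu
    exact absurd hu huz
  -- the key extension step
  have hstep : ∀ a x, P a → a ∈ L → (a = z ∨ t ≤ w a) → E a x → P x := by
    intro a x hPa haL hwa hax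
    obtain ⟨p, hnd, hch, hhd, hlast, hint⟩ := hPa
    have haprop : ∀ u, u ∈ p → u ≠ z → u ∈ L ∧ t ≤ w u := by
      intro u hu huz
      by_cases hua : u = a
      · subst hua
        exact ⟨haL, hwa.resolve_left huz⟩
      · exact hint u hu huz hua
    have hpne : p ≠ [] := by
      intro h; rw [h] at hhd; simp at hhd
    by_cases hxp : x ∈ p
    · -- take the prefix of p up to the first occurrence of x
      have hilt : p.idxOf x < p.length := List.idxOf_lt_length_iff.mpr hxp
      have hget : p[p.idxOf x] = x := List.getElem_idxOf hilt
      have hpre : p.take (p.idxOf x) ++ [x] <+: p := by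
        have hdrop : p.drop (p.idxOf x) = x :: p.drop (p.idxOf x + 1) := by
          rw [List.drop_eq_getElem_cons hilt, hget]
        refine ⟨p.drop (p.idxOf x + 1), ?_⟩
        rw [List.append_assoc, List.singleton_append, ← hdrop, List.take_append_drop]
      refine ⟨p.take (p.idxOf x) ++ [x], hpre.sublist.nodup hnd, hch.prefix hpre,
        (head?_eq_of_prefix hpre (by simp)).trans hhd, List.getLast?_concat, ?_⟩
      intro u hu huz hux
      exact haprop u (hpre.subset hu) huz
    · -- append x at the end
      refine ⟨p ++ [x], hnd.append (List.nodup_singleton x) (by simpa using fun h => (hxp h)),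
        ?_, (head?_eq_of_prefix ⟨[x], rfl⟩ hpne).symm ▸ hhd, List.getLast?_concat, ?_⟩
      · refine List.isChain_append.mpr ⟨hch, List.isChain_singleton x, ?_⟩
        intro y hy x' hx'
        rw [hlast] at hy
        simp at hy hx'
        subst hy; subst hx'
        exact hax
      · intro u hu huz hux
        have hup : u ∈ p := by
          rcases List.mem_append.mp hu with h | h
          · exact h
          · simp at h; exact absurd h hux
        exact haprop u hup huz
  -- the improved cut
  set A : Finset V := L.filter (fun u => P u ∧ (u = z ∨ t ≤ w u)) with hA
  have hzA : z ∈ A := Finset.mem_filter.mpr ⟨hz, hPz, Or.inl rfl⟩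
  set Ll : Finset V := L.filter (fun u => w u < t) with hLl
  set S' : Finset V := S.erase v ∪ (Ll \ A) with hS'
  set R' : Finset V := Finset.univ \ (A ∪ S') with hR'
  have hAL : A ⊆ L := Finset.filter_subset _ _
  have hLlL : Ll ⊆ L := Finset.filter_subset _ _
  have hS'sub : S' ⊆ S ∪ L := by
    intro x hx
    rcases Finset.mem_union.mp hx with h | h
    · exact Finset.mem_union_left _ (Finset.erase_subset _ _ h)
    · exact Finset.mem_union_right _ (hLlL (Finset.mem_sdiff.mp h).1)
  have hcut' : IsVertexCut E A S' R' := by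
    refine ⟨?_, ?_, ?_, ?_, ?_, ?_, ?_⟩
    · exact Finset.ne_empty_of_mem hzA
    · obtain ⟨r, hr⟩ := Finset.nonempty_of_ne_empty hR
      refine Finset.ne_empty_of_mem (a := r) (Finset.mem_sdiff.mpr ⟨Finset.mem_univ r, ?_⟩)
      intro hmem
      rcases Finset.mem_union.mp hmem with h | h
      · exact (Finset.disjoint_left.mp hLR) (hAL h) hr
      · rcases Finset.mem_union.mp (hS'sub h) with h' | h'
        · exact (Finset.disjoint_left.mp hSR) h' hr
        · exact (Finset.disjoint_left.mp hLR) h' hr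
    · rw [Finset.disjoint_left]
      intro a ha hmem
      rcases Finset.mem_union.mp hmem with h | h
      · exact (Finset.disjoint_left.mp hLS) (hAL ha) (Finset.erase_subset _ _ h)
      · exact (Finset.mem_sdiff.mp h).2 ha
    · rw [Finset.disjoint_left]
      intro a ha hmem
      exact (Finset.mem_sdiff.mp hmem).2 (Finset.mem_union_left _ ha)
    · rw [Finset.disjoint_left]
      intro a ha hmem
      exact (Finset.mem_sdiff.mp hmem).2 (Finset.mem_union_right _ ha)
    · exact Finset.union_sdiff_of_subset (Finset.subset_univ _)
    · intro a haA x hxR' hax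
      obtain ⟨haL', hPa, hwa⟩ := Finset.mem_filter.mp haA
      have hPx : P x := hstep a x hPa haL' hwa hax
      have hxnot := (Finset.mem_sdiff.mp hxR').2
      have hxA : x ∉ A := fun h => hxnot (Finset.mem_union_left _ h)
      have hxS' : x ∉ S' := fun h => hxnot (Finset.mem_union_right _ h)
      have hxmem : x ∈ L ∪ S ∪ R := huniv ▸ Finset.mem_univ x
      rcases Finset.mem_union.mp hxmem with h | hxRR
      · rcases Finset.mem_union.mp h with hxL | hxS
        · by_cases hwx : t ≤ w x
          · exact hxA (Finset.mem_filter.mpr ⟨hxL, hPx, Or.inr hwx⟩)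
          · refine hxS' (Finset.mem_union_right _ (Finset.mem_sdiff.mpr
              ⟨Finset.mem_filter.mpr ⟨hxL, lt_of_not_ge hwx⟩, hxA⟩))
        · by_cases hxv : x = v
          · exact hPv (hxv ▸ hPx)
          · exact hxS' (Finset.mem_union_left _ (Finset.mem_erase.mpr ⟨hxv, hxS⟩))
      · exact hnoedge a (hAL haA) x hxRR hax
  -- sum comparison
  have hSS' : ∑ u ∈ S, w u ≤ ∑ u ∈ S', w u := hmin A S' R' hcut'
  have h1 : ∑ u ∈ S', w u ≤ ∑ u ∈ S.erase v, w u + ∑ u ∈ Ll \ A, w u := by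
    have := Finset.sum_union_inter (s₁ := S.erase v) (s₂ := Ll \ A) (f := w)
    have h0 : (0:ℝ) ≤ ∑ u ∈ (S.erase v) ∩ (Ll \ A), w u :=
      Finset.sum_nonneg fun i _ => hw i
    linarith
  have h2 : ∑ u ∈ S.erase v, w u = ∑ u ∈ S, w u - w v := by
    have := Finset.sum_erase_add S w hv
    linarith
  have h3 : ∑ u ∈ Ll \ A, w u ≤ τ / 8 := by
    have h31 : ∑ u ∈ Ll \ A, w u ≤ ∑ u ∈ Ll, w u :=
      Finset.sum_le_sum_of_subset_of_nonneg Finset.sdiff_subset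
        (fun i _ _ => hw i)
    have h32 : ∑ u ∈ Ll, w u ≤ Ll.card • t :=
      Finset.sum_le_card_nsmul Ll w t (fun x hx => le_of_lt (Finset.mem_filter.mp hx).2)
    rw [nsmul_eq_mul] at h32
    have h33 : (Ll.card : ℝ) ≤ lam :=
      le_trans (by exact_mod_cast Finset.card_le_card hLlL) hlam
    have h34 : (Ll.card : ℝ) * t ≤ lam * t :=
      mul_le_mul_of_nonneg_right h33 (le_of_lt ht0)
    have h35 : lam * t = τ / 8 := by
      rw [ht]
      field_simp
    linarith
  linarith
end
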